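/- arXiv:1801.05242 — 13 statements merged into one kernel-verified Lean document; each statement's English description precedes it below -/
import Mathlib

section
/- The posterior mean x_m = x₀ + Σ₀ Aᵀ S_m Λ_m⁻¹ S_mᵀ r₀ reproduces the observed information exactly: S_mᵀ A x_m = S_mᵀ b. -/
/-!
`Λ = Sᵀ A Σ₀ Aᵀ S` is the Gram matrix of the columns of `Aᵀ S` in the inner product defined by
`Σ₀`; these columns are independent, so `Λ` is positive definite and hence invertible. Since
`Λ = (Sᵀ A)(Σ₀ Aᵀ S)`, the matrix `Σ₀ Aᵀ S Λ⁻¹` is a right inverse of `Sᵀ A`, which gives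
`Sᵀ A x_m = Sᵀ A x₀ + Sᵀ r₀ = Sᵀ b`.
-/

open Matrix

theorem Matrix.PosDef.transpose_mul_mul_mul_transpose_mul {n m : Type*} [Fintype n] [Fintype m]
    [DecidableEq n] {Sigma : Matrix n n ℝ} (hSigma : Sigma.PosDef) {A : Matrix n n ℝ}
    (hA : IsUnit A) {S : Matrix n m ℝ} (hS : Function.Injective S.mulVec) :
    (Sᵀ * A * Sigma * Aᵀ * S).PosDef := by
  have hAS : Function.Injective (Aᵀ * S).mulVec := by
    have hcomp : (Aᵀ * S).mulVec = Aᵀ.mulVec ∘ S.mulVec :=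
      funext fun v => (mulVec_mulVec v _ _).symm
    exact hcomp ▸ (mulVec_injective_of_isUnit ((isUnit_transpose A).mpr hA)).comp hS
  simpa [conjTranspose_eq_transpose_of_trivial, transpose_mul, Matrix.mul_assoc] using
    hSigma.conjTranspose_mul_mul_same hAS

theorem posterior_mean_reproduces_information_general
    (d m : ℕ)
    (A : Matrix (Fin d) (Fin d) ℝ) (hA : IsUnit A)
    (b : Fin d → ℝ)
    (Sigma0 : Matrix (Fin d) (Fin d) ℝ) (hSigma0 : Sigma0.PosDef)
    (x0 : Fin d → ℝ)
    (S : Matrix (Fin d) (Fin m) ℝ)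
    (hS : LinearIndependent ℝ (fun j : Fin m => fun i : Fin d => S i j))
    (Λm : Matrix (Fin m) (Fin m) ℝ) (hΛm : Λm = Sᵀ * A * Sigma0 * Aᵀ * S)
    (r0 : Fin d → ℝ) (hr0 : r0 = b - A *ᵥ x0)
    (xm : Fin d → ℝ)
    (hxm : xm = x0 + (Sigma0 * Aᵀ * S * Λm⁻¹ * Sᵀ) *ᵥ r0) :
    Sᵀ *ᵥ (A *ᵥ xm) = Sᵀ *ᵥ b := by
  have hΛ : IsUnit Λm.det := by
    rw [← isUnit_iff_isUnit_det, hΛm]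
    exact (hSigma0.transpose_mul_mul_mul_transpose_mul hA (mulVec_injective_iff.mpr hS)).isUnit
  have hgain : Sᵀ * A * (Sigma0 * Aᵀ * S * Λm⁻¹ * Sᵀ) = Sᵀ :=
    calc _ = Λm * Λm⁻¹ * Sᵀ := by rw [hΛm]; simp only [Matrix.mul_assoc]
      _ = Sᵀ := by rw [mul_nonsing_inv _ hΛ, Matrix.one_mul]
  calc Sᵀ *ᵥ (A *ᵥ xm)
      = Sᵀ *ᵥ (A *ᵥ x0) + (Sᵀ * A * (Sigma0 * Aᵀ * S * Λm⁻¹ * Sᵀ)) *ᵥ r0 := by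
        rw [hxm, mulVec_add, mulVec_add, mulVec_mulVec, mulVec_mulVec, mulVec_mulVec]
    _ = Sᵀ *ᵥ b := by rw [hgain, hr0, mulVec_sub, add_sub_cancel]

/-- The posterior mean `x_m = x₀ + Σ₀ Aᵀ S Λ⁻¹ Sᵀ r₀` reproduces the
observed information exactly: `Sᵀ A x_m = Sᵀ b`. -/
theorem posterior_mean_reproduces_information
    (d m : ℕ) (hm : m ≤ d)
    (A : Matrix (Fin d) (Fin d) ℝ) (hA : IsUnit A)
    (b : Fin d → ℝ)
    (Sigma0 : Matrix (Fin d) (Fin d) ℝ) (hSigma0 : Sigma0.PosDef)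
    (x0 : Fin d → ℝ)
    (S : Matrix (Fin d) (Fin m) ℝ)
    (hS : LinearIndependent ℝ (fun j : Fin m => fun i : Fin d => S i j))
    (Λm : Matrix (Fin m) (Fin m) ℝ) (hΛm : Λm = Sᵀ * A * Sigma0 * Aᵀ * S)
    (r0 : Fin d → ℝ) (hr0 : r0 = b - A *ᵥ x0)
    (xm : Fin d → ℝ)
    (hxm : xm = x0 + (Sigma0 * Aᵀ * S * Λm⁻¹ * Sᵀ) *ᵥ r0) :
    Sᵀ *ᵥ (A *ᵥ xm) = Sᵀ *ᵥ b :=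
  posterior_mean_reproduces_information_general d m A hA b Sigma0 hSigma0 x0 S hS Λm hΛm r0 hr0 xm
    hxm
end

section
/- The posterior covariance Σ_m = Σ₀ − Σ₀ Aᵀ S_m Λ_m⁻¹ S_mᵀ A Σ₀ is symmetric positive semidefinite and satisfies Σ_m Aᵀ S_m = 0; that is, the posterior covariance annihilates the explored directions Aᵀ s₁, …, Aᵀ s_m. -/
/-!
The Gram matrix `Λ = Bᴴ Σ₀ B` of the explored directions `B = Aᵀ S` is positive definite, since
`B` is injective. The block matrix `[B 1]ᴴ Σ₀ [B 1] = [[Λ, Bᴴ Σ₀], [Σ₀ B, Σ₀]]` is positive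
semidefinite, and its Schur complement with respect to `Λ` is the posterior covariance, which is
therefore positive semidefinite. Annihilation of `B` is the identity `Λ⁻¹ Λ = 1`.
-/

open Matrix

namespace Matrix

variable {n m R : Type*} [Fintype n] [Fintype m] [DecidableEq m]

/-- The covariance `P - P B (Bᴴ P B)⁻¹ Bᴴ P` of a Gaussian with prior covariance `P`
conditioned on the observations `Bᴴ x`. -/
noncomputable def posteriorCov [CommRing R] [StarRing R] (P : Matrix n n R)
    (B : Matrix n m R) : Matrix n n R :=
  P - P * B * (Bᴴ * P * B)⁻¹ * Bᴴ * P

theorem posteriorCov_mul_eq_zero [CommRing R] [StarRing R] (P : Matrix n n R)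
    (B : Matrix n m R) (hΛ : IsUnit (Bᴴ * P * B).det) :
    posteriorCov P B * B = 0 := by
  have hcancel : P * B * (Bᴴ * P * B)⁻¹ * Bᴴ * P * B =
      P * B * ((Bᴴ * P * B)⁻¹ * (Bᴴ * P * B)) := by
    simp only [Matrix.mul_assoc]
  rw [posteriorCov, Matrix.sub_mul, hcancel, nonsing_inv_mul _ hΛ, Matrix.mul_one, sub_self]

theorem PosSemidef.posteriorCov [DecidableEq n] {K : Type*} [Field K] [PartialOrder K]
    [StarRing K] [StarOrderedRing K] {P : Matrix n n K} (hP : P.PosSemidef)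
    {B : Matrix n m K} (hΛ : (Bᴴ * P * B).PosDef) :
    (posteriorCov P B).PosSemidef := by
  let := hΛ.isUnit.invertible
  have hblocks : (fromCols B 1)ᴴ * P * fromCols B 1 =
      fromBlocks (Bᴴ * P * B) (Bᴴ * P) (Bᴴ * P)ᴴ P := by
    rw [conjTranspose_fromCols_eq_fromRows_conjTranspose, fromRows_mul, fromRows_mul_fromCols,
      conjTranspose_mul, hP.1.eq]
    simp
  have hblocks_psd := hP.conjTranspose_mul_mul_same (fromCols B (1 : Matrix n n K))
  rw [hblocks, hΛ.fromBlocks₁₁] at hblocks_psd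
  simpa [Matrix.posteriorCov, conjTranspose_mul, hP.1.eq, Matrix.mul_assoc] using hblocks_psd

end Matrix

theorem posterior_covariance_psd_and_annihilates_general
    (d m : ℕ)
    (A : Matrix (Fin d) (Fin d) ℝ) (hA : IsUnit A)
    (Sigma0 : Matrix (Fin d) (Fin d) ℝ) (hSigma0 : Sigma0.PosDef)
    (S : Matrix (Fin d) (Fin m) ℝ)
    (hS : LinearIndependent ℝ (fun j : Fin m => fun i : Fin d => S i j))
    (Λm : Matrix (Fin m) (Fin m) ℝ) (hΛm : Λm = Sᵀ * A * Sigma0 * Aᵀ * S)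
    (Sigmam : Matrix (Fin d) (Fin d) ℝ)
    (hSigmam : Sigmam = Sigma0 - Sigma0 * Aᵀ * S * Λm⁻¹ * Sᵀ * A * Sigma0) :
    Sigmam.PosSemidef ∧ Sigmam * Aᵀ * S = 0 := by
  set B := Aᵀ * S with hB
  have hB_inj : Function.Injective B.mulVec := by
    have hAt : Function.Injective Aᵀ.mulVec :=
      mulVec_injective_iff_isUnit.2 ((isUnit_transpose A).2 hA)
    simpa [B, Function.comp_def, mulVec_mulVec] using hAt.comp (mulVec_injective_iff.2 hS)
  have hΛ : Λm = Bᴴ * Sigma0 * B := by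
    simp [hΛm, B, conjTranspose_eq_transpose_of_trivial, transpose_mul, Matrix.mul_assoc]
  have hΛ_pd : (Bᴴ * Sigma0 * B).PosDef := hSigma0.conjTranspose_mul_mul_same hB_inj
  have hSigmam_eq : Sigmam = posteriorCov Sigma0 B := by
    rw [hSigmam, posteriorCov, ← hΛ]
    simp [B, conjTranspose_eq_transpose_of_trivial, transpose_mul, Matrix.mul_assoc]
  rw [Matrix.mul_assoc, ← hB, hSigmam_eq]
  exact ⟨hSigma0.posSemidef.posteriorCov hΛ_pd,
    posteriorCov_mul_eq_zero Sigma0 B ((isUnit_iff_isUnit_det _).1 hΛ_pd.isUnit)⟩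

/-- The posterior covariance `Σ_m = Σ₀ − Σ₀ Aᵀ S Λ⁻¹ Sᵀ A Σ₀` is symmetric
positive semidefinite and annihilates the explored directions: `Σ_m Aᵀ S = 0`. -/
theorem posterior_covariance_psd_and_annihilates
    (d m : ℕ) (hm : m ≤ d)
    (A : Matrix (Fin d) (Fin d) ℝ) (hA : IsUnit A)
    (Sigma0 : Matrix (Fin d) (Fin d) ℝ) (hSigma0 : Sigma0.PosDef)
    (S : Matrix (Fin d) (Fin m) ℝ)
    (hS : LinearIndependent ℝ (fun j : Fin m => fun i : Fin d => S i j))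
    (Λm : Matrix (Fin m) (Fin m) ℝ) (hΛm : Λm = Sᵀ * A * Sigma0 * Aᵀ * S)
    (Sigmam : Matrix (Fin d) (Fin d) ℝ)
    (hSigmam : Sigmam = Sigma0 - Sigma0 * Aᵀ * S * Λm⁻¹ * Sᵀ * A * Sigma0) :
    Sigmam.PosSemidef ∧ Sigmam * Aᵀ * S = 0 :=
  posterior_covariance_psd_and_annihilates_general d m A hA Sigma0 hSigma0 S hS Λm hΛm Sigmam
    hSigmam
end

section
/- (Proposition 3) The posterior covariance contracts at a linear rate: tr(Σ_m Σ₀⁻¹) = d − m. -/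
/-!
With `B = Sᵀ A` and `C = Σ₀ Aᵀ S` we have `Λ_m = B C`, and `Σ_m Σ₀⁻¹ = 1 - C (B C)⁻¹ B`.
By cyclicity of the trace, `tr (C (B C)⁻¹ B) = tr (B C (B C)⁻¹) = m`; the only analytic input is
that `Λ_m = (Aᵀ S)ᵀ Σ₀ (Aᵀ S)` is positive definite, hence invertible.
-/

open Matrix

namespace Matrix

variable {l m n R : Type*} [Fintype m] [Fintype n] [CommRing R]

theorem trace_mul_inv_mul_eq_card [DecidableEq m] {B : Matrix m n R} {C : Matrix n m R}
    (h : IsUnit (B * C).det) : (C * (B * C)⁻¹ * B).trace = Fintype.card m := by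
  rw [trace_mul_comm, ← Matrix.mul_assoc, mul_nonsing_inv _ h, trace_one]

theorem sub_mul_mul_nonsing_inv [DecidableEq n] {P Q : Matrix n n R} (h : IsUnit P.det) :
    (P - Q * P) * P⁻¹ = 1 - Q := by
  rw [Matrix.sub_mul, mul_nonsing_inv _ h, Matrix.mul_assoc, mul_nonsing_inv _ h, Matrix.mul_one]

theorem mulVec_mul_injective {A : Matrix l n R} {S : Matrix n m R}
    (hA : Function.Injective A.mulVec) (hS : Function.Injective S.mulVec) :
    Function.Injective (A * S).mulVec := by
  simpa only [Function.comp_def, mulVec_mulVec] using hA.comp hS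

end Matrix

theorem posterior_covariance_trace_general
    (d m : ℕ)
    (A : Matrix (Fin d) (Fin d) ℝ) (hA : IsUnit A)
    (Sigma0 : Matrix (Fin d) (Fin d) ℝ) (hSigma0 : Sigma0.PosDef)
    (S : Matrix (Fin d) (Fin m) ℝ)
    (hS : LinearIndependent ℝ (fun j : Fin m => fun i : Fin d => S i j))
    (Λm : Matrix (Fin m) (Fin m) ℝ) (hΛm : Λm = Sᵀ * A * Sigma0 * Aᵀ * S)
    (Sigmam : Matrix (Fin d) (Fin d) ℝ)
    (hSigmam : Sigmam = Sigma0 - Sigma0 * Aᵀ * S * Λm⁻¹ * Sᵀ * A * Sigma0) :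
    (Sigmam * Sigma0⁻¹).trace = (d : ℝ) - (m : ℝ) := by
  have hM : Function.Injective (Aᵀ * S).mulVec :=
    mulVec_mul_injective (mulVec_injective_of_isUnit ((isUnit_transpose A).mpr hA))
      (mulVec_injective_iff.mpr hS)
  have hΛ_posDef : Λm.PosDef := by
    simpa only [hΛm, conjTranspose_eq_transpose_of_trivial, transpose_mul, transpose_transpose,
      Matrix.mul_assoc] using hSigma0.conjTranspose_mul_mul_same hM
  have hΛ_factor : Λm = (Sᵀ * A) * (Sigma0 * Aᵀ * S) := by
    rw [hΛm]; simp only [Matrix.mul_assoc]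
  have hΛ : IsUnit ((Sᵀ * A) * (Sigma0 * Aᵀ * S)).det :=
    hΛ_factor ▸ (isUnit_iff_isUnit_det _).mp hΛ_posDef.isUnit
  have hSigma0_det : IsUnit Sigma0.det := (isUnit_iff_isUnit_det _).mp hSigma0.isUnit
  calc (Sigmam * Sigma0⁻¹).trace
      = (1 - Sigma0 * Aᵀ * S * Λm⁻¹ * (Sᵀ * A)).trace := by
        rw [hSigmam, sub_mul_mul_nonsing_inv hSigma0_det, Matrix.mul_assoc _ Sᵀ A]
    _ = d - m := by
        rw [trace_sub, trace_one, hΛ_factor, trace_mul_inv_mul_eq_card hΛ]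
        simp

/-- **Proposition 3.** The posterior covariance contracts at a linear rate:
`tr(Σ_m Σ₀⁻¹) = d − m`. -/
theorem posterior_covariance_trace
    (d m : ℕ) (hm : m ≤ d)
    (A : Matrix (Fin d) (Fin d) ℝ) (hA : IsUnit A)
    (Sigma0 : Matrix (Fin d) (Fin d) ℝ) (hSigma0 : Sigma0.PosDef)
    (S : Matrix (Fin d) (Fin m) ℝ)
    (hS : LinearIndependent ℝ (fun j : Fin m => fun i : Fin d => S i j))
    (Λm : Matrix (Fin m) (Fin m) ℝ) (hΛm : Λm = Sᵀ * A * Sigma0 * Aᵀ * S)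
    (Sigmam : Matrix (Fin d) (Fin d) ℝ)
    (hSigmam : Sigmam = Sigma0 - Sigma0 * Aᵀ * S * Λm⁻¹ * Sᵀ * A * Sigma0) :
    (Sigmam * Sigma0⁻¹).trace = (d : ℝ) - (m : ℝ) :=
  posterior_covariance_trace_general d m A hA Sigma0 hSigma0 S hS Λm hΛm Sigmam hSigmam
end

section
/- (Combination of Propositions 2 and 3) The posterior mean is consistent: ‖x_m − x*‖_{Σ₀⁻¹} ≤ √(d − m) · ‖x₀ − x*‖_{Σ₀⁻¹}; in particular, for m = d the posterior mean recovers the exact solution, x_d = x*. -/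
/-!
With `e = x₀ - x*` and `r₀ = A (x* - x₀)`, the update reads `x_m - x* = (1 - P) e` for
`P = Σ₀ C (Cᵀ Σ₀ C)⁻¹ Cᵀ`, `C = Aᵀ S_m`. This `P` is idempotent and self-adjoint for the
`Σ₀⁻¹` inner product, so Pythagoras gives `‖(1 - P) e‖² = ‖e‖² - ‖P e‖² ≤ ‖e‖²`, and
`1 ≤ √(d - m)` when `m < d`. When `m = d`, `C` is invertible, so `P = 1` and `x_d = x*`.
-/

open Matrix

/-- The `M`-norm `‖v‖_M = √(vᵀ M v)` associated with a symmetric positive definite matrix. -/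
noncomputable def matNorm {d : ℕ} (M : Matrix (Fin d) (Fin d) ℝ) (v : Fin d → ℝ) : ℝ :=
  Real.sqrt (v ⬝ᵥ (M *ᵥ v))

namespace Matrix

variable {n k : Type*} [Fintype n] [Fintype k]

theorem transpose_one_sub_mul_mul_one_sub [DecidableEq n] {R : Type*} [CommRing R]
    {M P : Matrix n n R} (hP : P * P = P) (hMP : Pᵀ * M = M * P) :
    (1 - P)ᵀ * M * (1 - P) = M - Pᵀ * M * P := by
  have hPMP : Pᵀ * M * P = M * P := by rw [hMP, Matrix.mul_assoc, hP]
  calc (1 - P)ᵀ * M * (1 - P) = M - Pᵀ * M - M * P + Pᵀ * M * P := by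
        rw [transpose_sub, transpose_one]; noncomm_ring
    _ = M - Pᵀ * M * P := by rw [hPMP, hMP]; abel

theorem dotProduct_mulVec_sub_mulVec_self [DecidableEq n] {R : Type*} [CommRing R]
    {M P : Matrix n n R} (hP : P * P = P) (hMP : Pᵀ * M = M * P) (v : n → R) :
    (v - P *ᵥ v) ⬝ᵥ (M *ᵥ (v - P *ᵥ v)) = v ⬝ᵥ (M *ᵥ v) - (P *ᵥ v) ⬝ᵥ (M *ᵥ (P *ᵥ v)) := by
  have hquad (B : Matrix n n R) : v ⬝ᵥ ((Bᵀ * M * B) *ᵥ v) = (B *ᵥ v) ⬝ᵥ (M *ᵥ (B *ᵥ v)) := by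
    rw [← mulVec_mulVec, ← mulVec_mulVec, dotProduct_mulVec, vecMul_transpose]
  have key := congrArg (fun X => v ⬝ᵥ (X *ᵥ v)) (transpose_one_sub_mul_mul_one_sub hP hMP)
  simpa only [hquad, sub_mulVec, one_mulVec, dotProduct_sub] using key

/-- The `Σ⁻¹`-orthogonal projection onto the column space of `Σ * C`. -/
noncomputable def weightedProj [DecidableEq k] (Sigma : Matrix n n ℝ) (C : Matrix n k ℝ) :
    Matrix n n ℝ :=
  Sigma * C * (Cᵀ * Sigma * C)⁻¹ * Cᵀ

variable [DecidableEq k]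

theorem weightedProj_mul_self {Sigma : Matrix n n ℝ} {C : Matrix n k ℝ}
    (h : IsUnit (Cᵀ * Sigma * C).det) :
    weightedProj Sigma C * weightedProj Sigma C = weightedProj Sigma C :=
  calc weightedProj Sigma C * weightedProj Sigma C
      = Sigma * C * (((Cᵀ * Sigma * C)⁻¹ * (Cᵀ * Sigma * C)) * (Cᵀ * Sigma * C)⁻¹) * Cᵀ := by
        simp only [weightedProj, Matrix.mul_assoc]
    _ = weightedProj Sigma C := by rw [nonsing_inv_mul _ h, Matrix.one_mul]; rfl

theorem transpose_weightedProj_mul_inv [DecidableEq n] {Sigma : Matrix n n ℝ}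
    (hSymm : Sigmaᵀ = Sigma) (hdet : IsUnit Sigma.det) (C : Matrix n k ℝ) :
    (weightedProj Sigma C)ᵀ * Sigma⁻¹ = Sigma⁻¹ * weightedProj Sigma C := by
  have hΛ : (Cᵀ * Sigma * C)⁻¹ᵀ = (Cᵀ * Sigma * C)⁻¹ := by
    rw [transpose_nonsing_inv, transpose_mul, transpose_mul, hSymm, transpose_transpose,
      Matrix.mul_assoc]
  calc (weightedProj Sigma C)ᵀ * Sigma⁻¹
      = C * (Cᵀ * Sigma * C)⁻¹ * Cᵀ * (Sigma * Sigma⁻¹) := by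
        rw [weightedProj, transpose_mul, transpose_mul, transpose_mul, hΛ, hSymm,
          transpose_transpose]
        simp only [Matrix.mul_assoc]
    _ = Sigma⁻¹ * Sigma * C * (Cᵀ * Sigma * C)⁻¹ * Cᵀ := by
        rw [mul_nonsing_inv _ hdet, nonsing_inv_mul _ hdet, Matrix.mul_one, Matrix.one_mul]
    _ = Sigma⁻¹ * weightedProj Sigma C := by simp only [weightedProj, Matrix.mul_assoc]

theorem weightedProj_eq_one {Sigma C : Matrix k k ℝ} (hSigma : IsUnit Sigma.det)
    (hC : IsUnit C.det) : weightedProj Sigma C = 1 := by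
  have hCt : IsUnit Cᵀ.det := by rwa [det_transpose]
  rw [weightedProj, mul_inv_rev, mul_inv_rev]
  calc Sigma * C * (C⁻¹ * (Sigma⁻¹ * Cᵀ⁻¹)) * Cᵀ
      = Sigma * ((C * C⁻¹) * (Sigma⁻¹ * (Cᵀ⁻¹ * Cᵀ))) := by simp only [Matrix.mul_assoc]
    _ = 1 := by
      rw [mul_nonsing_inv _ hC, nonsing_inv_mul _ hCt, Matrix.one_mul, Matrix.mul_one,
        mul_nonsing_inv _ hSigma]

theorem add_mulVec_sub_mulVec_sub_eq {A Sigma : Matrix n n ℝ} {S : Matrix n k ℝ}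
    {b xstar : n → ℝ} (hb : A *ᵥ xstar = b) (x0 : n → ℝ) :
    x0 + (Sigma * Aᵀ * S * (Sᵀ * A * Sigma * Aᵀ * S)⁻¹ * Sᵀ) *ᵥ (b - A *ᵥ x0) - xstar
      = (x0 - xstar) - weightedProj Sigma (Aᵀ * S) *ᵥ (x0 - xstar) := by
  have hP : Sigma * Aᵀ * S * (Sᵀ * A * Sigma * Aᵀ * S)⁻¹ * Sᵀ * A
      = weightedProj Sigma (Aᵀ * S) := by
    simp only [weightedProj, transpose_mul, transpose_transpose, Matrix.mul_assoc]
  rw [← hb, ← mulVec_sub, mulVec_mulVec, hP, ← neg_sub x0, mulVec_neg]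
  abel

end Matrix

theorem matNorm_sub_mulVec_self_le {d : ℕ} {M P : Matrix (Fin d) (Fin d) ℝ}
    (hM : M.PosSemidef) (hP : P * P = P) (hMP : Pᵀ * M = M * P) (v : Fin d → ℝ) :
    matNorm M (v - P *ᵥ v) ≤ matNorm M v := by
  apply Real.sqrt_le_sqrt
  rw [dotProduct_mulVec_sub_mulVec_self hP hMP]
  exact sub_le_self _ (by simpa using hM.dotProduct_mulVec_nonneg (P *ᵥ v))

/-- **Propositions 2 and 3 combined.** The posterior mean is consistent:
`‖x_m − x*‖_{Σ₀⁻¹} ≤ √(d − m) ⬝ ‖x₀ − x*‖_{Σ₀⁻¹}`; in particular, for `m = d` the posterior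
mean recovers the exact solution, `x_d = x*`. -/
theorem posterior_mean_consistent
    (d m : ℕ) (hm : m ≤ d)
    (A : Matrix (Fin d) (Fin d) ℝ) (hA : IsUnit A)
    (b : Fin d → ℝ) (xstar : Fin d → ℝ) (hxstar : xstar = A⁻¹ *ᵥ b)
    (Sigma0 : Matrix (Fin d) (Fin d) ℝ) (hSigma0 : Sigma0.PosDef)
    (x0 : Fin d → ℝ)
    (S : Matrix (Fin d) (Fin m) ℝ)
    (hS : LinearIndependent ℝ (fun j : Fin m => fun i : Fin d => S i j))
    (Λm : Matrix (Fin m) (Fin m) ℝ) (hΛm : Λm = Sᵀ * A * Sigma0 * Aᵀ * S)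
    (r0 : Fin d → ℝ) (hr0 : r0 = b - A *ᵥ x0)
    (xm : Fin d → ℝ) (hxm : xm = x0 + (Sigma0 * Aᵀ * S * Λm⁻¹ * Sᵀ) *ᵥ r0) :
    matNorm Sigma0⁻¹ (xm - xstar) ≤
        Real.sqrt ((d : ℝ) - (m : ℝ)) * matNorm Sigma0⁻¹ (x0 - xstar) ∧
      (m = d → xm = xstar) := by
  have hb : A *ᵥ xstar = b := by
    rw [hxstar, mulVec_mulVec, mul_nonsing_inv _ ((isUnit_iff_isUnit_det A).mp hA), one_mulVec]
  have herr : xm - xstar = (x0 - xstar) - weightedProj Sigma0 (Aᵀ * S) *ᵥ (x0 - xstar) := by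
    rw [hxm, hr0, hΛm, add_mulVec_sub_mulVec_sub_eq hb]
  have hC : Function.Injective (Aᵀ * S).mulVec := by
    intro u v huv
    simp only [← mulVec_mulVec] at huv
    exact mulVec_injective_iff.mpr hS (mulVec_injective_iff_isUnit.mpr ((isUnit_transpose A).mpr hA) huv)
  have hSigma0det := (isUnit_iff_isUnit_det _).mp hSigma0.isUnit
  have hexact : m = d → xm = xstar := by
    rintro rfl
    rw [← sub_eq_zero, herr, weightedProj_eq_one hSigma0det
      ((isUnit_iff_isUnit_det _).mp (mulVec_injective_iff_isUnit.mp hC)), one_mulVec, sub_self]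
  refine ⟨?_, hexact⟩
  rcases hm.lt_or_eq with hlt | rfl
  · have hΛ : IsUnit ((Aᵀ * S)ᵀ * Sigma0 * (Aᵀ * S)).det :=
      (isUnit_iff_isUnit_det _).mp (hSigma0.conjTranspose_mul_mul_same hC).isUnit
    calc matNorm Sigma0⁻¹ (xm - xstar) ≤ matNorm Sigma0⁻¹ (x0 - xstar) := by
          rw [herr]
          exact matNorm_sub_mulVec_self_le hSigma0.posSemidef.inv (weightedProj_mul_self hΛ)
            (transpose_weightedProj_mul_inv hSigma0.isHermitian hSigma0det _) _
      _ ≤ Real.sqrt ((d : ℝ) - (m : ℝ)) * matNorm Sigma0⁻¹ (x0 - xstar) := by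
          refine le_mul_of_one_le_left (Real.sqrt_nonneg _) (Real.one_le_sqrt.mpr ?_)
          rw [le_sub_iff_add_le']
          exact_mod_cast hlt
  · simp [hexact rfl, matNorm]
end

section
/- (Proposition 4) Suppose A is symmetric positive definite, the prior mean is x₀ = 0 and the prior covariance is Σ₀ = A⁻¹. If the columns of S_m are A-orthonormal, i.e. S_mᵀ A S_m = I_m, then the posterior mean x_m = x₀ + Σ₀ Aᵀ S_m Λ_m⁻¹ S_mᵀ (b − A x₀) reduces to the conjugate gradient estimate x_m = S_m S_mᵀ b. -/
open Matrix

/-- **Proposition 4.** If `A` is symmetric positive definite, the prior mean is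
`x₀ = 0`, the prior covariance is `Σ₀ = A⁻¹` and the columns of `S` are `A`-orthonormal
(`Sᵀ A S = I`), then the posterior mean `x_m = x₀ + Σ₀ Aᵀ S Λ⁻¹ Sᵀ (b − A x₀)` reduces to
the conjugate gradient estimate `x_m = S Sᵀ b`. -/
theorem posterior_mean_is_cg
    (d m : ℕ) (hm : m ≤ d)
    (A : Matrix (Fin d) (Fin d) ℝ) (hA : A.PosDef)
    (b : Fin d → ℝ)
    (S : Matrix (Fin d) (Fin m) ℝ) (hortho : Sᵀ * A * S = 1)
    (x0 : Fin d → ℝ) (hx0 : x0 = 0)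
    (Sigma0 : Matrix (Fin d) (Fin d) ℝ) (hSigma0 : Sigma0 = A⁻¹)
    (Λm : Matrix (Fin m) (Fin m) ℝ) (hΛm : Λm = Sᵀ * A * Sigma0 * Aᵀ * S)
    (xm : Fin d → ℝ)
    (hxm : xm = x0 + (Sigma0 * Aᵀ * S * Λm⁻¹ * Sᵀ) *ᵥ (b - A *ᵥ x0)) :
    xm = (S * Sᵀ) *ᵥ b := by
  have hAt : Aᵀ = A := by simpa using hA.1.eq
  have hdet : IsUnit A.det := isUnit_iff_ne_zero.mpr hA.det_pos.ne'
  have hinvA : A⁻¹ * A = 1 := nonsing_inv_mul A hdet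
  have hAinvA : A * A⁻¹ = 1 := mul_nonsing_inv A hdet
  have hΛ1 : Λm = 1 := by
    rw [hΛm, hSigma0, hAt]
    calc Sᵀ * A * A⁻¹ * A * S = Sᵀ * (A * A⁻¹) * A * S := by
          simp [Matrix.mul_assoc]
      _ = Sᵀ * A * S := by rw [hAinvA]; simp [Matrix.mul_assoc]
      _ = 1 := hortho
  rw [hxm, hx0, hSigma0, hΛ1, hAt]
  simp [Matrix.mul_assoc, ← Matrix.mul_assoc A⁻¹ A, hinvA]
end

section
/- (Proposition 5, core optimisation claim) Let M and Σ₀ be symmetric positive definite with square roots satisfying M^{⊤/2} M^{1/2} = M, and let Φ_m ∈ ℝ^{d×m} be a matrix whose columns are orthonormal eigenvectors of M^{1/2} Σ₀ M^{⊤/2} corresponding to its m largest eigenvalues (Φ_mᵀ Φ_m = I_m). Then the search-direction matrix S_m = A^{-⊤} M^{⊤/2} Φ_m minimises tr(M^{1/2} Σ_m(S) M^{⊤/2}) over all matrices S ∈ ℝ^{d×m} with linearly independent columns, where Σ_m(S) = Σ₀ − Σ₀ Aᵀ S (Sᵀ A Σ₀ Aᵀ S)⁻¹ Sᵀ A Σ₀.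 -/
/-!
Put `B = M^{1/2} Σ₀ M^{⊤/2}` and `N = M^{-⊤/2} Aᵀ S`. Conjugating by `M^{1/2}` turns the
posterior covariance into `B - B N (Nᵀ B N)⁻¹ Nᵀ B`, so minimising its trace means maximising
`tr (P B)`, where `P = B^{1/2} N (Nᵀ B N)⁻¹ Nᵀ B^{1/2}` is an orthogonal projection of rank `m`.
By Ky Fan's maximum principle `tr (P B) ≤ μ₁ + ⋯ + μ_m`, and `S_opt` corresponds to `N = Φ`,
where equality holds.
-/

open Matrix

/-- The posterior covariance `Σ_m(S) = Σ₀ − Σ₀ Aᵀ S (Sᵀ A Σ₀ Aᵀ S)⁻¹ Sᵀ A Σ₀` of the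
probabilistic linear solver with prior covariance `Σ₀` and search directions `S`. -/
noncomputable def postCov {d m : ℕ} (A Sigma0 : Matrix (Fin d) (Fin d) ℝ)
    (S : Matrix (Fin d) (Fin m) ℝ) : Matrix (Fin d) (Fin d) ℝ :=
  Sigma0 - Sigma0 * Aᵀ * S * (Sᵀ * A * Sigma0 * Aᵀ * S)⁻¹ * Sᵀ * A * Sigma0

namespace Matrix

section Projection

variable {R n k : Type*} [CommRing R] [Fintype n] [Fintype k] [DecidableEq k]

lemma isSymm_mul_inv_mul_transpose (K : Matrix n k R) : (K * (Kᵀ * K)⁻¹ * Kᵀ).IsSymm := by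
  simp [IsSymm, transpose_mul, transpose_nonsing_inv, Matrix.mul_assoc]

lemma isIdempotentElem_mul_inv_mul_transpose {K : Matrix n k R} (hK : IsUnit (Kᵀ * K)) :
    IsIdempotentElem (K * (Kᵀ * K)⁻¹ * Kᵀ) := by
  rw [IsIdempotentElem, Matrix.mul_assoc, ← Matrix.mul_assoc Kᵀ, ← Matrix.mul_assoc Kᵀ,
    Matrix.mul_assoc (Kᵀ * K),
    mul_nonsing_inv_cancel_left _ _ ((isUnit_iff_isUnit_det _).mp hK)]

lemma trace_mul_inv_mul_transpose {K : Matrix n k R} (hK : IsUnit (Kᵀ * K)) :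
    (K * (Kᵀ * K)⁻¹ * Kᵀ).trace = Fintype.card k := by
  rw [trace_mul_comm, ← Matrix.mul_assoc, mul_nonsing_inv _ ((isUnit_iff_isUnit_det _).mp hK),
    trace_one]

end Projection

variable {n k : Type*} [Fintype n] [Fintype k]

lemma IsSymm.posSemidef_of_isIdempotentElem {P : Matrix n n ℝ} (hPs : P.IsSymm)
    (hP : IsIdempotentElem P) : P.PosSemidef := by
  have hPP : P = Pᴴ * P := by rw [conjTranspose_eq_transpose_of_trivial, hPs.eq, hP.eq]
  rw [hPP]
  exact posSemidef_conjTranspose_mul_self P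

lemma trace_mul_nonneg_of_isIdempotentElem {P X : Matrix n n ℝ} (hPs : P.IsSymm)
    (hP : IsIdempotentElem P) (hX : X.PosSemidef) : 0 ≤ (P * X).trace := by
  have hPXP : (P * X).trace = (Pᴴ * X * P).trace := by
    rw [conjTranspose_eq_transpose_of_trivial, hPs.eq, trace_mul_cycle, hP.eq]
  rw [hPXP]
  exact (hX.conjTranspose_mul_mul_same P).trace_nonneg

variable [DecidableEq k]

lemma mul_eq_mul_diagonal_of_mulVec_col {B : Matrix n n ℝ} {Φ : Matrix n k ℝ} {μ : k → ℝ}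
    (h : ∀ j, B *ᵥ Φ.col j = μ j • Φ.col j) : B * Φ = Φ * diagonal μ := by
  ext i j
  rw [mul_diagonal, mul_comm]
  simpa [mul_apply, mulVec, dotProduct] using congrFun (h j) i

lemma trace_mul_mul_inv_mul_eq_sum {B : Matrix n n ℝ} (hB : B.IsSymm)
    {Φ : Matrix n k ℝ} (hΦ : Φᵀ * Φ = 1) {μ : k → ℝ} (hBΦ : B * Φ = Φ * diagonal μ)
    (hD : IsUnit (Φᵀ * B * Φ)) :
    (B * Φ * (Φᵀ * B * Φ)⁻¹ * Φᵀ * B).trace = ∑ j, μ j := by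
  have hΦB : Φᵀ * B = diagonal μ * Φᵀ := by
    simpa [transpose_mul, hB.eq] using congrArg transpose hBΦ
  have hD' : Φᵀ * B * Φ = diagonal μ := by rw [hΦB, Matrix.mul_assoc, hΦ, Matrix.mul_one]
  rw [hD'] at hD ⊢
  rw [hBΦ, Matrix.mul_assoc, hΦB, Matrix.mul_assoc Φ,
    mul_nonsing_inv _ ((isUnit_iff_isUnit_det _).mp hD), Matrix.mul_one, trace_mul_comm,
    Matrix.mul_assoc, hΦ, Matrix.mul_one, trace_diagonal]

variable [DecidableEq n]

lemma isUnit_of_posDef_transpose_mul_self {L : Matrix n n ℝ} (hL : (Lᵀ * L).PosDef) : IsUnit L := by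
  have h : IsUnit (Lᵀ.det * L.det) := by
    rw [← det_mul]
    exact (isUnit_iff_isUnit_det _).mp hL.isUnit
  exact (isUnit_iff_isUnit_det _).mpr (isUnit_of_mul_isUnit_right h)

lemma transpose_mul_mul_apply_self_le_one {Φ : Matrix n k ℝ} (hΦ : Φᵀ * Φ = 1)
    {P : Matrix n n ℝ} (hPs : P.IsSymm) (hP : IsIdempotentElem P) (j : k) :
    (Φᵀ * P * Φ) j j ≤ 1 := by
  have h := ((isSymm_one.sub hPs).posSemidef_of_isIdempotentElem
    hP.one_sub).conjTranspose_mul_mul_same Φ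
  rw [conjTranspose_eq_transpose_of_trivial, Matrix.mul_sub, Matrix.sub_mul, Matrix.mul_one,
    hΦ] at h
  simpa using h.diag_nonneg (i := j)

lemma sub_mul_mul_sub_of_mul_eq_mul_diagonal {B : Matrix n n ℝ} (hB : B.IsSymm)
    {Φ : Matrix n k ℝ} (hΦ : Φᵀ * Φ = 1) {μ : k → ℝ} (hBΦ : B * Φ = Φ * diagonal μ) :
    (1 - Φ * Φᵀ) * B * (1 - Φ * Φᵀ) = B - Φ * diagonal μ * Φᵀ := by
  have hΦB : Φᵀ * B = diagonal μ * Φᵀ := by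
    simpa [transpose_mul, hB.eq] using congrArg transpose hBΦ
  have hQB : Φ * Φᵀ * B = Φ * diagonal μ * Φᵀ := by
    rw [Matrix.mul_assoc, hΦB, Matrix.mul_assoc]
  have hBQ : B * (Φ * Φᵀ) = Φ * diagonal μ * Φᵀ := by rw [← Matrix.mul_assoc, hBΦ]
  have hQBQ : Φ * Φᵀ * B * (Φ * Φᵀ) = Φ * diagonal μ * Φᵀ := by
    rw [Matrix.mul_assoc, hBQ, ← Matrix.mul_assoc, ← Matrix.mul_assoc, Matrix.mul_assoc Φ, hΦ,
      Matrix.mul_one]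
  calc (1 - Φ * Φᵀ) * B * (1 - Φ * Φᵀ)
      = B - Φ * Φᵀ * B - B * (Φ * Φᵀ) + Φ * Φᵀ * B * (Φ * Φᵀ) := by noncomm_ring
    _ = B - Φ * diagonal μ * Φᵀ := by rw [hQBQ, hQB, hBQ]; abel

lemma posSemidef_smul_sub_of_le_on_orthogonal {B : Matrix n n ℝ} (hB : B.IsSymm)
    {Φ : Matrix n k ℝ} (hΦ : Φᵀ * Φ = 1) {μ : k → ℝ} (hBΦ : B * Φ = Φ * diagonal μ) {c : ℝ}
    (hc : ∀ v : n → ℝ, Φᵀ *ᵥ v = 0 → v ⬝ᵥ (B *ᵥ v) ≤ c * (v ⬝ᵥ v)) :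
    (c • (1 - Φ * Φᵀ) - (B - Φ * diagonal μ * Φᵀ)).PosSemidef := by
  have hdec := sub_mul_mul_sub_of_mul_eq_mul_diagonal hB hΦ hBΦ
  set Q := 1 - Φ * Φᵀ
  have hQs : Q.IsSymm := isSymm_one.sub (by simp [IsSymm, transpose_mul])
  have hQ : IsIdempotentElem Q := by
    refine IsIdempotentElem.one_sub ?_
    rw [IsIdempotentElem, Matrix.mul_assoc, ← Matrix.mul_assoc Φᵀ, hΦ, Matrix.one_mul]
  have hΦQ : Φᵀ * Q = 0 := by
    rw [Matrix.mul_sub, Matrix.mul_one, ← Matrix.mul_assoc, hΦ, Matrix.one_mul, sub_self]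
  clear_value Q
  have hform : c • Q - (B - Φ * diagonal μ * Φᵀ) = Qᵀ * (c • 1 - B) * Q := by
    rw [← hdec, hQs.eq, Matrix.mul_sub, Matrix.sub_mul, Matrix.mul_smul, Matrix.mul_one,
      Matrix.smul_mul, hQ.eq]
  rw [hform]
  refine .of_dotProduct_mulVec_nonneg ?_ fun x => ?_
  · simp [IsHermitian, transpose_mul, hB.eq, hQs.eq, Matrix.mul_assoc]
  · have hQx : Φᵀ *ᵥ (Q *ᵥ x) = 0 := by rw [mulVec_mulVec, hΦQ, zero_mulVec]
    have h := hc _ hQx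
    rw [star_trivial, ← mulVec_mulVec, ← mulVec_mulVec, dotProduct_mulVec, vecMul_transpose,
      sub_mulVec, smul_mulVec, one_mulVec, dotProduct_sub, dotProduct_smul, smul_eq_mul]
    linarith

/-- Ky Fan's maximum principle. -/
theorem trace_mul_le_sum_of_isIdempotentElem {B : Matrix n n ℝ} (hB : B.IsSymm)
    {Φ : Matrix n k ℝ} (hΦ : Φᵀ * Φ = 1) {μ : k → ℝ} (hBΦ : B * Φ = Φ * diagonal μ)
    (hLead : ∀ v : n → ℝ, (∀ j, Φ.col j ⬝ᵥ v = 0) → ∀ j, v ⬝ᵥ (B *ᵥ v) ≤ μ j * (v ⬝ᵥ v))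
    {P : Matrix n n ℝ} (hPs : P.IsSymm) (hP : IsIdempotentElem P)
    (htr : P.trace = Fintype.card k) :
    (P * B).trace ≤ ∑ j, μ j := by
  rcases isEmpty_or_nonempty k with hk | hk
  · have hP0 : P = 0 :=
      (hPs.posSemidef_of_isIdempotentElem hP).trace_eq_zero_iff.mp (by simpa using htr)
    simp [hP0]
  obtain ⟨j₀, -, hj₀⟩ := Finset.exists_min_image Finset.univ μ Finset.univ_nonempty
  -- `B ≤ Φ diag μ Φᵀ + μ_{j₀} (1 - Φ Φᵀ)` in the Loewner order, and `tr (P ·)` is monotone.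
  have hbound := trace_mul_nonneg_of_isIdempotentElem hPs hP
    (posSemidef_smul_sub_of_le_on_orthogonal hB hΦ hBΦ (c := μ j₀)
      fun v hv => hLead v (fun j => congrFun hv j) j₀)
  set p : k → ℝ := fun j => (Φᵀ * P * Φ) j j
  have hp : ∀ j, p j ≤ 1 := transpose_mul_mul_apply_self_le_one hΦ hPs hP
  have htrQ : (P * (Φ * Φᵀ)).trace = ∑ j, p j := by
    rw [← Matrix.mul_assoc, trace_mul_comm, ← Matrix.mul_assoc]; rfl
  have htrD : (P * (Φ * diagonal μ * Φᵀ)).trace = ∑ j, p j * μ j := by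
    rw [← Matrix.mul_assoc, ← Matrix.mul_assoc, trace_mul_comm, ← Matrix.mul_assoc,
      ← Matrix.mul_assoc]
    simp [trace, mul_diagonal, p]
  rw [Matrix.mul_sub, trace_sub, Matrix.mul_smul, trace_smul, Matrix.mul_sub, Matrix.mul_one,
    trace_sub, htr, htrQ, Matrix.mul_sub, trace_sub, htrD, smul_eq_mul] at hbound
  have hgap : 0 ≤ ∑ j, (1 - p j) * (μ j - μ j₀) := Finset.sum_nonneg fun j _ =>
    mul_nonneg (sub_nonneg.mpr (hp j)) (sub_nonneg.mpr (hj₀ j (Finset.mem_univ j)))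
  simp only [sub_mul, one_mul, mul_sub, Finset.sum_sub_distrib, Finset.sum_const,
    Finset.card_univ, nsmul_eq_mul, ← Finset.sum_mul] at hgap
  linarith

theorem trace_mul_mul_inv_mul_le_sum {B : Matrix n n ℝ} (hB : B.PosSemidef)
    {Φ : Matrix n k ℝ} (hΦ : Φᵀ * Φ = 1) {μ : k → ℝ} (hBΦ : B * Φ = Φ * diagonal μ)
    (hLead : ∀ v : n → ℝ, (∀ j, Φ.col j ⬝ᵥ v = 0) → ∀ j, v ⬝ᵥ (B *ᵥ v) ≤ μ j * (v ⬝ᵥ v))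
    {N : Matrix n k ℝ} (hN : IsUnit (Nᵀ * B * N)) :
    (B * N * (Nᵀ * B * N)⁻¹ * Nᵀ * B).trace ≤ ∑ j, μ j := by
  open scoped MatrixOrder in
  obtain ⟨C, hCs, rfl⟩ : ∃ C : Matrix n n ℝ, C.IsSymm ∧ C * C = B :=
    ⟨CFC.sqrt B, by simpa using (CFC.sqrt_nonneg B).posSemidef.isHermitian,
      CFC.sqrt_mul_sqrt_self B hB.nonneg⟩
  have hK : (C * N)ᵀ * (C * N) = Nᵀ * (C * C) * N := by
    simp only [transpose_mul, hCs.eq, Matrix.mul_assoc]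
  rw [← hK] at hN
  have hproj := trace_mul_le_sum_of_isIdempotentElem (isHermitian_iff_isSymm.mp hB.isHermitian)
    hΦ hBΦ hLead (isSymm_mul_inv_mul_transpose (C * N))
    (isIdempotentElem_mul_inv_mul_transpose hN) (trace_mul_inv_mul_transpose hN)
  rw [hK, transpose_mul, hCs.eq] at hproj
  convert hproj using 1
  simp only [Matrix.mul_assoc]
  rw [trace_mul_comm C]
  simp only [Matrix.mul_assoc]

theorem trace_sub_mul_inv_mul_le {B : Matrix n n ℝ} (hB : B.PosDef)
    {Φ : Matrix n k ℝ} (hΦ : Φᵀ * Φ = 1) {μ : k → ℝ} (hBΦ : B * Φ = Φ * diagonal μ)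
    (hLead : ∀ v : n → ℝ, (∀ j, Φ.col j ⬝ᵥ v = 0) → ∀ j, v ⬝ᵥ (B *ᵥ v) ≤ μ j * (v ⬝ᵥ v))
    {N : Matrix n k ℝ} (hN : Function.Injective N.mulVec) :
    (B - B * Φ * (Φᵀ * B * Φ)⁻¹ * Φᵀ * B).trace ≤ (B - B * N * (Nᵀ * B * N)⁻¹ * Nᵀ * B).trace := by
  have hG : ∀ N : Matrix n k ℝ, Function.Injective N.mulVec → IsUnit (Nᵀ * B * N) :=
    fun K hK => by simpa using (hB.conjTranspose_mul_mul_same hK).isUnit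
  have hΦinj : Function.Injective Φ.mulVec := fun x y h => by
    simpa [mulVec_mulVec, hΦ] using congrArg (Φᵀ *ᵥ ·) h
  rw [trace_sub, trace_sub, trace_mul_mul_inv_mul_eq_sum (isHermitian_iff_isSymm.mp hB.isHermitian)
    hΦ hBΦ (hG Φ hΦinj)]
  exact sub_le_sub_left (trace_mul_mul_inv_mul_le_sum hB.posSemidef hΦ hBΦ hLead (hG N hN)) _

end Matrix

lemma mul_postCov_mul_transpose {d m : ℕ} (A Sigma0 L : Matrix (Fin d) (Fin d) ℝ)
    (S : Matrix (Fin d) (Fin m) ℝ) {N : Matrix (Fin d) (Fin m) ℝ} (hN : Lᵀ * N = Aᵀ * S) :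
    L * postCov A Sigma0 S * Lᵀ = L * Sigma0 * Lᵀ -
      L * Sigma0 * Lᵀ * N * (Nᵀ * (L * Sigma0 * Lᵀ) * N)⁻¹ * Nᵀ * (L * Sigma0 * Lᵀ) := by
  have hNt : Nᵀ * L = Sᵀ * A := by simpa [transpose_mul] using congrArg transpose hN
  have h1 : L * Sigma0 * Lᵀ * N = L * Sigma0 * Aᵀ * S := by simp only [Matrix.mul_assoc, hN]
  have h2 : Nᵀ * (L * Sigma0 * Lᵀ) = Sᵀ * A * Sigma0 * Lᵀ := by
    simp only [← Matrix.mul_assoc, hNt]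
  have h3 : Nᵀ * (L * Sigma0 * Lᵀ) * N = Sᵀ * A * Sigma0 * Aᵀ * S := by
    rw [h2]; simp only [Matrix.mul_assoc, hN]
  rw [postCov, h1, h3, Matrix.mul_assoc _ Nᵀ, h2, Matrix.mul_sub, Matrix.sub_mul]
  simp only [Matrix.mul_assoc]

theorem optimal_information_general
    (d m : ℕ)
    (A : Matrix (Fin d) (Fin d) ℝ) (hA : IsUnit A)
    (Sigma0 : Matrix (Fin d) (Fin d) ℝ) (hSigma0 : Sigma0.PosDef)
    (M : Matrix (Fin d) (Fin d) ℝ) (hM : M.PosDef)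
    (Msq : Matrix (Fin d) (Fin d) ℝ) (hMsq : Msqᵀ * Msq = M)
    (Φ : Matrix (Fin d) (Fin m) ℝ) (hΦ : Φᵀ * Φ = 1)
    (μ : Fin m → ℝ)
    (hEig : ∀ j : Fin m,
      (Msq * Sigma0 * Msqᵀ) *ᵥ (fun i => Φ i j) = μ j • (fun i => Φ i j))
    (hLead : ∀ v : Fin d → ℝ, (∀ j : Fin m, (fun i => Φ i j) ⬝ᵥ v = 0) →
      ∀ j : Fin m, v ⬝ᵥ ((Msq * Sigma0 * Msqᵀ) *ᵥ v) ≤ μ j * (v ⬝ᵥ v))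
    (Sopt : Matrix (Fin d) (Fin m) ℝ) (hSopt : Sopt = (A⁻¹)ᵀ * Msqᵀ * Φ) :
    ∀ S : Matrix (Fin d) (Fin m) ℝ,
      LinearIndependent ℝ (fun j : Fin m => fun i : Fin d => S i j) →
      (Msq * postCov A Sigma0 Sopt * Msqᵀ).trace ≤
        (Msq * postCov A Sigma0 S * Msqᵀ).trace := by
  intro S hS
  have hMsq_unit : IsUnit Msq := isUnit_of_posDef_transpose_mul_self (hMsq ▸ hM)
  have hB : (Msq * Sigma0 * Msqᵀ).PosDef := by
    simpa using hSigma0.mul_mul_conjTranspose_same (vecMul_injective_iff_isUnit.mpr hMsq_unit)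
  have hSopt' : Msqᵀ * Φ = Aᵀ * Sopt := by
    rw [hSopt, ← Matrix.mul_assoc, ← Matrix.mul_assoc, ← transpose_mul,
      nonsing_inv_mul _ ((isUnit_iff_isUnit_det _).mp hA), transpose_one, Matrix.one_mul]
  have hN : Msqᵀ * ((Msqᵀ)⁻¹ * Aᵀ * S) = Aᵀ * S := by
    rw [← Matrix.mul_assoc, ← Matrix.mul_assoc, mul_nonsing_inv _ ((isUnit_iff_isUnit_det _).mp
      ((isUnit_transpose _).mpr hMsq_unit)), Matrix.one_mul]
  have hNinj : Function.Injective ((Msqᵀ)⁻¹ * Aᵀ * S).mulVec := by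
    have hU : IsUnit ((Msqᵀ)⁻¹ * Aᵀ) :=
      (isUnit_nonsing_inv_iff.mpr ((isUnit_transpose _).mpr hMsq_unit)).mul
        ((isUnit_transpose _).mpr hA)
    have hcomp : ((Msqᵀ)⁻¹ * Aᵀ * S).mulVec = ((Msqᵀ)⁻¹ * Aᵀ).mulVec ∘ S.mulVec :=
      funext fun x => (mulVec_mulVec x _ _).symm
    rw [hcomp]
    exact (mulVec_injective_of_isUnit hU).comp (mulVec_injective_iff.mpr hS)
  rw [mul_postCov_mul_transpose A Sigma0 Msq Sopt hSopt',
    mul_postCov_mul_transpose A Sigma0 Msq S hN]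
  exact trace_sub_mul_inv_mul_le hB hΦ (mul_eq_mul_diagonal_of_mulVec_col hEig) hLead hNinj

/-- **Proposition 5, core optimisation claim.** Let `M` and `Σ₀` be symmetric
positive definite, `Msq` a square root of `M` (`Msqᵀ Msq = M`), and let `Φ ∈ ℝ^{d×m}` have
orthonormal columns (`Φᵀ Φ = I`) that are eigenvectors of `B = Msq Σ₀ Msqᵀ` corresponding to
its `m` largest eigenvalues `μ₁,…,μ_m` (i.e. the Rayleigh quotient of `B` on the orthogonal
complement of the columns of `Φ` is at most each `μ_j`).  Then the search directions
`S_opt = A⁻ᵀ Msqᵀ Φ` minimise `tr(Msq Σ_m(S) Msqᵀ)` over all `S ∈ ℝ^{d×m}` with linearly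
independent columns. -/
theorem optimal_information
    (d m : ℕ) (hm : m ≤ d)
    (A : Matrix (Fin d) (Fin d) ℝ) (hA : IsUnit A)
    (Sigma0 : Matrix (Fin d) (Fin d) ℝ) (hSigma0 : Sigma0.PosDef)
    (M : Matrix (Fin d) (Fin d) ℝ) (hM : M.PosDef)
    (Msq : Matrix (Fin d) (Fin d) ℝ) (hMsq : Msqᵀ * Msq = M)
    (Φ : Matrix (Fin d) (Fin m) ℝ) (hΦ : Φᵀ * Φ = 1)
    (μ : Fin m → ℝ)
    (hEig : ∀ j : Fin m,
      (Msq * Sigma0 * Msqᵀ) *ᵥ (fun i => Φ i j) = μ j • (fun i => Φ i j))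
    (hLead : ∀ v : Fin d → ℝ, (∀ j : Fin m, (fun i => Φ i j) ⬝ᵥ v = 0) →
      ∀ j : Fin m, v ⬝ᵥ ((Msq * Sigma0 * Msqᵀ) *ᵥ v) ≤ μ j * (v ⬝ᵥ v))
    (Sopt : Matrix (Fin d) (Fin m) ℝ) (hSopt : Sopt = (A⁻¹)ᵀ * Msqᵀ * Φ) :
    ∀ S : Matrix (Fin d) (Fin m) ℝ,
      LinearIndependent ℝ (fun j : Fin m => fun i : Fin d => S i j) →
      (Msq * postCov A Sigma0 Sopt * Msqᵀ).trace ≤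
        (Msq * postCov A Sigma0 S * Msqᵀ).trace :=
  optimal_information_general d m A hA Sigma0 hSigma0 M hM Msq hMsq Φ hΦ μ hEig hLead Sopt hSopt
end

section
/- (Proposition 6, mean update) Suppose the columns s₁,…,s_m of S_m are A Σ₀ Aᵀ-orthonormal, i.e. S_mᵀ A Σ₀ Aᵀ S_m = I_m. Define iterates by x_j = x_{j−1} + Σ₀ Aᵀ s_j (s_jᵀ r_{j−1}) with r_{j−1} = b − A x_{j−1} for j = 1,…,m. Then x_m coincides with the posterior mean x₀ + Σ₀ Aᵀ S_m S_mᵀ (b − A x₀). -/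
open Matrix

private lemma my_mulVec_sum {ι d e : Type*} [Fintype d] (M : Matrix e d ℝ) (t : Finset ι)
    (v : ι → d → ℝ) : M *ᵥ (∑ i ∈ t, v i) = ∑ i ∈ t, M *ᵥ v i := by
  funext i
  simp [Matrix.mulVec, dotProduct, Finset.sum_apply, Finset.mul_sum]
  exact Finset.sum_comm

private lemma my_dotProduct_sum {ι d : Type*} [Fintype d] (u : d → ℝ) (t : Finset ι)
    (v : ι → d → ℝ) : u ⬝ᵥ (∑ i ∈ t, v i) = ∑ i ∈ t, u ⬝ᵥ v i := by
  simp [dotProduct, Finset.sum_apply, Finset.mul_sum]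
  exact Finset.sum_comm

/-- **Proposition 6, mean update.** If the columns `s₁,…,s_m` of `S_m` are
`A Σ₀ Aᵀ`-orthonormal and the iterates are defined by
`x_j = x_{j−1} + Σ₀ Aᵀ s_j (s_jᵀ r_{j−1})` with `r_{j−1} = b − A x_{j−1}`, then `x_m`
coincides with the posterior mean `x₀ + Σ₀ Aᵀ S_m S_mᵀ (b − A x₀)`.
(Here `s` is `0`-indexed: `s j` is the direction used to pass from `x j` to `x (j+1)`.) -/
theorem conjugate_directions_iterative_mean
    (d m : ℕ) (hm : m ≤ d)
    (A : Matrix (Fin d) (Fin d) ℝ) (hA : IsUnit A)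
    (b : Fin d → ℝ)
    (Sigma0 : Matrix (Fin d) (Fin d) ℝ) (hSigma0 : Sigma0.PosDef)
    (x0 : Fin d → ℝ)
    (s : Fin m → Fin d → ℝ)
    (hortho : ∀ i j : Fin m,
      s i ⬝ᵥ ((A * Sigma0 * Aᵀ) *ᵥ s j) = if i = j then 1 else 0)
    (S : Matrix (Fin d) (Fin m) ℝ) (hS : S = Matrix.of fun i j => s j i)
    (x : ℕ → Fin d → ℝ) (hx0 : x 0 = x0)
    (hrec : ∀ j : Fin m,
      x (j + 1) = x j + (s j ⬝ᵥ (b - A *ᵥ x j)) • ((Sigma0 * Aᵀ) *ᵥ s j)) :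
    x m = x0 + (Sigma0 * Aᵀ * S * Sᵀ) *ᵥ (b - A *ᵥ x0) := by
  set r0 : Fin d → ℝ := b - A *ᵥ x0 with hr0
  set f : Fin m → Fin d → ℝ := fun j => (s j ⬝ᵥ r0) • ((Sigma0 * Aᵀ) *ᵥ s j) with hf
  have key : ∀ k, k ≤ m →
      x k = x0 + ∑ j ∈ Finset.univ.filter (fun j : Fin m => (j : ℕ) < k), f j := by
    intro k hk
    induction k with
    | zero => simp [hx0]
    | succ k ih =>
      have hk' : k < m := hk
      have ihk := ih (le_of_lt hk')
      set jk : Fin m := ⟨k, hk'⟩ with hjk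
      have hres : s jk ⬝ᵥ (b - A *ᵥ x k) = s jk ⬝ᵥ r0 := by
        rw [ihk]
        have : b - A *ᵥ (x0 + ∑ j ∈ Finset.univ.filter (fun j : Fin m => (j : ℕ) < k), f j)
            = r0 - ∑ j ∈ Finset.univ.filter (fun j : Fin m => (j : ℕ) < k),
                (s j ⬝ᵥ r0) • ((A * Sigma0 * Aᵀ) *ᵥ s j) := by
          rw [Matrix.mulVec_add, my_mulVec_sum]
          have : ∀ j : Fin m, A *ᵥ f j = (s j ⬝ᵥ r0) • ((A * Sigma0 * Aᵀ) *ᵥ s j) := by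
            intro j
            simp [hf, Matrix.mulVec_smul, Matrix.mulVec_mulVec, Matrix.mul_assoc]
          simp only [this, hr0]
          abel
        rw [this, dotProduct_sub, my_dotProduct_sum]
        have hz : ∀ j ∈ Finset.univ.filter (fun j : Fin m => (j : ℕ) < k),
            s jk ⬝ᵥ ((s j ⬝ᵥ r0) • ((A * Sigma0 * Aᵀ) *ᵥ s j)) = 0 := by
          intro j hj
          simp only [Finset.mem_filter] at hj
          have hne : jk ≠ j := by
            intro h
            rw [← h] at hj
            simp [hjk] at hj
          rw [dotProduct_smul, hortho jk j, if_neg hne, smul_zero]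
        rw [Finset.sum_congr rfl hz]
        simp
      have hstep := hrec jk
      have hcast : ((jk : ℕ) + 1) = k + 1 := by simp [hjk]
      rw [hcast] at hstep
      have hset : Finset.univ.filter (fun j : Fin m => (j : ℕ) < k + 1)
          = insert jk (Finset.univ.filter (fun j : Fin m => (j : ℕ) < k)) := by
        ext j
        simp only [Finset.mem_filter, Finset.mem_insert, Finset.mem_univ, true_and]
        constructor
        · intro h
          rcases Nat.lt_succ_iff_lt_or_eq.mp h with h | h
          · exact Or.inr h
          · left; exact Fin.ext h
        · rintro (h | h)
          · rw [h]; exact Nat.lt_succ_self k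
          · exact Nat.lt_succ_of_lt h
      have hnotmem : jk ∉ Finset.univ.filter (fun j : Fin m => (j : ℕ) < k) := by
        simp [hjk]
      rw [hstep, hres, ihk, hset, Finset.sum_insert hnotmem]
      simp only [hf, hjk]
      abel
  have hfin : x m = x0 + ∑ j : Fin m, f j := by
    have := key m le_rfl
    rw [this]
    congr 1
    apply Finset.sum_congr
    · ext j; simp [j.isLt]
    · intro _ _; rfl
  rw [hfin]
  congr 1
  have : (Sigma0 * Aᵀ * S * Sᵀ) *ᵥ r0 = (Sigma0 * Aᵀ) *ᵥ (S *ᵥ (Sᵀ *ᵥ r0)) := by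
    simp [Matrix.mulVec_mulVec, Matrix.mul_assoc]
  rw [this]
  have h1 : Sᵀ *ᵥ r0 = fun j => s j ⬝ᵥ r0 := by
    funext j
    simp [hS, Matrix.mulVec, dotProduct, transpose]
  have h2 : S *ᵥ (fun j => s j ⬝ᵥ r0) = ∑ j : Fin m, (s j ⬝ᵥ r0) • s j := by
    funext i
    simp [hS, Matrix.mulVec, dotProduct, Finset.sum_apply, mul_comm]
  rw [h1, h2, my_mulVec_sum]
  apply Finset.sum_congr rfl
  intro j _
  simp [hf, Matrix.mulVec_smul]
end

section
/- (Equation for information simplification) Suppose the columns s₁,…,s_m of S_m are A Σ₀ Aᵀ-orthonormal and the iterates are defined by x_j = x_{j−1} + Σ₀ Aᵀ s_j (s_jᵀ r_{j−1}) with r_j = b − A x_j. Then for every j ≤ m, s_jᵀ r_{j−1} = s_jᵀ r₀, i.e. the locally computed data equal the data computed from the initial residual. -/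
open Matrix

/-- **information simplification.** If the directions `s₁,…,s_m` are
`A Σ₀ Aᵀ`-orthonormal and the iterates are defined by
`x_j = x_{j−1} + Σ₀ Aᵀ s_j (s_jᵀ r_{j−1})` with `r_j = b − A x_j`, then for every `j ≤ m`
the locally computed data equal the data computed from the initial residual:
`s_jᵀ r_{j−1} = s_jᵀ r₀`.
(Here `s` is `0`-indexed: `s j` is the direction used to pass from `x j` to `x (j+1)`.) -/
theorem local_data_equals_initial_data
    (d m : ℕ) (hm : m ≤ d)
    (A : Matrix (Fin d) (Fin d) ℝ) (hA : IsUnit A)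
    (b : Fin d → ℝ)
    (Sigma0 : Matrix (Fin d) (Fin d) ℝ) (hSigma0 : Sigma0.PosDef)
    (x0 : Fin d → ℝ) (r0 : Fin d → ℝ) (hr0 : r0 = b - A *ᵥ x0)
    (s : Fin m → Fin d → ℝ)
    (hortho : ∀ i j : Fin m,
      s i ⬝ᵥ ((A * Sigma0 * Aᵀ) *ᵥ s j) = if i = j then 1 else 0)
    (x : ℕ → Fin d → ℝ) (hx0 : x 0 = x0)
    (hrec : ∀ j : Fin m,
      x (j + 1) = x j + (s j ⬝ᵥ (b - A *ᵥ x j)) • ((Sigma0 * Aᵀ) *ᵥ s j)) :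
    ∀ j : Fin m, s j ⬝ᵥ (b - A *ᵥ x j) = s j ⬝ᵥ r0 := by
  intro j
  subst hr0; subst hx0
  suffices h : ∀ k : ℕ, k ≤ j.val → s j ⬝ᵥ (b - A *ᵥ x k) = s j ⬝ᵥ (b - A *ᵥ x 0) by
    exact h j.val le_rfl
  intro k hk
  induction k with
  | zero => rfl
  | succ n ih =>
    have hnj : n < j.val := Nat.lt_of_succ_le hk
    have hn : n < m := lt_trans hnj j.isLt
    have hK := hrec ⟨n, hn⟩
    simp only at hK
    rw [hK, mulVec_add, mulVec_smul, mulVec_mulVec, ← Matrix.mul_assoc]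
    have hne : j ≠ (⟨n, hn⟩ : Fin m) := by
      intro h; rw [h] at hnj; exact lt_irrefl n hnj
    have horth := hortho j ⟨n, hn⟩
    rw [if_neg hne] at horth
    rw [show b - (A *ᵥ x n + (s ⟨n, hn⟩ ⬝ᵥ (b - A *ᵥ x n)) • ((A * Sigma0 * Aᵀ) *ᵥ s ⟨n, hn⟩))
        = (b - A *ᵥ x n) - (s ⟨n, hn⟩ ⬝ᵥ (b - A *ᵥ x n)) • ((A * Sigma0 * Aᵀ) *ᵥ s ⟨n, hn⟩)
        from by abel, dotProduct_sub, dotProduct_smul, horth]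
    simp [ih (le_of_lt hnj)]
end

section
/- (Proposition 7, Bayesian conjugate gradient directions) Define r_j = b − A x_j, s̃₁ = r₀, s₁ = s̃₁ / ‖s̃₁‖_{AΣ₀Aᵀ}, and for j > 1, s̃_j = r_{j−1} − ⟨s_{j−1}, r_{j−1}⟩_{AΣ₀Aᵀ} s_{j−1} and s_j = s̃_j / ‖s̃_j‖_{AΣ₀Aᵀ}, where the iterates are x_j = x_{j−1} + Σ₀ Aᵀ s_j (s_jᵀ r_{j−1}). If s̃_j ≠ 0 for all j ≤ m, then the set {s₁,…,s_m} is A Σ₀ Aᵀ-orthonormal: s_iᵀ A Σ₀ Aᵀ s_j = δ_{ij} for all i, j ≤ m. -/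
/-!
With `M = A Σ₀ Aᵀ`, the update of the iterates turns into the residual recursion
`r_k = r_{k-1} - α_k M s_k` with step size `α_k = s_kᵀ r_{k-1}`. This is conjugate gradients
in disguise, and the classical argument applies: by induction on `j`, the directions
`s_1, …, s_j` are `M`-conjugate and every residual `r_l` is orthogonal to `s_1, …, s_l`.
Since `r_k` lies in the span of `s_k` and `s_{k+1}`, the residuals are then mutually orthogonal;
this gives `α_k = ‖r_{k-1}‖² / ‖s̃_k‖_M ≠ 0`, so `M s_i` is a multiple of `r_{i-1} - r_i`, which
is what makes the new direction conjugate to the old ones.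
-/

open Matrix

namespace Matrix

theorem PosDef.isSymm_of_real {n : Type*} {M : Matrix n n ℝ} (hM : M.PosDef) : M.IsSymm :=
  isHermitian_iff_isSymm.1 hM.1

variable {n : Type*} [Fintype n]

theorem IsSymm.dotProduct_mulVec_comm {R : Type*} [CommSemiring R] {M : Matrix n n R}
    (hM : M.IsSymm) (u v : n → R) : u ⬝ᵥ (M *ᵥ v) = v ⬝ᵥ (M *ᵥ u) := by
  rw [dotProduct_mulVec, ← mulVec_transpose, hM.eq, dotProduct_comm]

theorem PosDef.dotProduct_mulVec_self_pos {M : Matrix n n ℝ} (hM : M.PosDef) {v : n → ℝ}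
    (hv : v ≠ 0) : 0 < v ⬝ᵥ (M *ᵥ v) := by
  simpa using hM.dotProduct_mulVec_pos hv

theorem PosDef.inv_sqrt_smul_dotProduct_mulVec_self {M : Matrix n n ℝ} (hM : M.PosDef)
    {v : n → ℝ} (hv : v ≠ 0) :
    ((Real.sqrt (v ⬝ᵥ (M *ᵥ v)))⁻¹ • v) ⬝ᵥ (M *ᵥ ((Real.sqrt (v ⬝ᵥ (M *ᵥ v)))⁻¹ • v)) = 1 := by
  have hpos := hM.dotProduct_mulVec_self_pos hv
  rw [mulVec_smul, dotProduct_smul, smul_dotProduct, smul_eq_mul, smul_eq_mul, ← mul_assoc,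
    ← mul_inv, Real.mul_self_sqrt hpos.le, inv_mul_cancel₀ hpos.ne']

end Matrix

variable {n : Type*} [Fintype n]

/-- The Bayesian conjugate gradient recursion with `M = A Σ₀ Aᵀ` and the iterates eliminated:
`st k` is the unnormalised direction `s̃_k`, and indices of directions start at `1`. -/
structure IsBayesCGRun (M : Matrix n n ℝ) (m : ℕ) (r s st : ℕ → n → ℝ) : Prop where
  residual_succ : ∀ k < m, r (k + 1) = r k - (s (k + 1) ⬝ᵥ r k) • (M *ᵥ s (k + 1))
  st_one : st 1 = r 0
  st_succ : ∀ k, 1 ≤ k → k < m → st (k + 1) = r k - (s k ⬝ᵥ (M *ᵥ r k)) • s k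
  s_eq : ∀ k, 1 ≤ k → k ≤ m → s k = (Real.sqrt (st k ⬝ᵥ (M *ᵥ st k)))⁻¹ • st k
  st_ne_zero : ∀ k, 1 ≤ k → k ≤ m → st k ≠ 0

namespace IsBayesCGRun

variable {M : Matrix n n ℝ} {m i j k l : ℕ} {r s st : ℕ → n → ℝ}

theorem sqrt_st_dotProduct_mulVec_st_pos (h : IsBayesCGRun M m r s st) (hM : M.PosDef)
    (hk : 1 ≤ k) (hkm : k ≤ m) : 0 < Real.sqrt (st k ⬝ᵥ (M *ᵥ st k)) :=
  Real.sqrt_pos.2 (hM.dotProduct_mulVec_self_pos (h.st_ne_zero k hk hkm))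

theorem st_eq_sqrt_smul (h : IsBayesCGRun M m r s st) (hM : M.PosDef) (hk : 1 ≤ k)
    (hkm : k ≤ m) : st k = Real.sqrt (st k ⬝ᵥ (M *ᵥ st k)) • s k := by
  rw [h.s_eq k hk hkm, smul_smul,
    mul_inv_cancel₀ (h.sqrt_st_dotProduct_mulVec_st_pos hM hk hkm).ne', one_smul]

theorem s_dotProduct_mulVec_self (h : IsBayesCGRun M m r s st) (hM : M.PosDef) (hk : 1 ≤ k)
    (hkm : k ≤ m) : s k ⬝ᵥ (M *ᵥ s k) = 1 := by
  rw [h.s_eq k hk hkm]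
  exact hM.inv_sqrt_smul_dotProduct_mulVec_self (h.st_ne_zero k hk hkm)

theorem residual_ne_zero (h : IsBayesCGRun M m r s st) (hk : k < m) : r k ≠ 0 := by
  intro hr
  refine h.st_ne_zero (k + 1) (by omega) hk ?_
  rcases Nat.eq_zero_or_pos k with rfl | hk1
  · rw [h.st_one, hr]
  · rw [h.st_succ k hk1 hk, hr, mulVec_zero, dotProduct_zero, zero_smul, sub_zero]

theorem s_succ_dotProduct_residual_ne_zero (h : IsBayesCGRun M m r s st) (hM : M.PosDef)
    (hk : k < m) (hB : 1 ≤ k → s k ⬝ᵥ r k = 0) : s (k + 1) ⬝ᵥ r k ≠ 0 := by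
  have hst : st (k + 1) ⬝ᵥ r k = r k ⬝ᵥ r k := by
    rcases Nat.eq_zero_or_pos k with rfl | hk1
    · rw [h.st_one]
    · rw [h.st_succ k hk1 hk, sub_dotProduct, smul_dotProduct, hB hk1, smul_zero, sub_zero]
  rw [h.s_eq (k + 1) (by omega) hk, smul_dotProduct, hst, smul_eq_mul]
  exact mul_ne_zero (inv_ne_zero (h.sqrt_st_dotProduct_mulVec_st_pos hM (by omega) hk).ne')
    fun h0 => h.residual_ne_zero hk (dotProduct_self_eq_zero.1 h0)

theorem residual_dotProduct_residual (h : IsBayesCGRun M m r s st) (hM : M.PosDef)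
    (hl : l ≤ m) (hB : ∀ i, 1 ≤ i → i ≤ l → s i ⬝ᵥ r l = 0) (hkl : k < l) :
    r k ⬝ᵥ r l = 0 := by
  have hst : ∀ i, 1 ≤ i → i ≤ l → st i ⬝ᵥ r l = 0 := fun i hi hil => by
    rw [h.st_eq_sqrt_smul hM hi (hil.trans hl), smul_dotProduct, hB i hi hil, smul_zero]
  rcases Nat.eq_zero_or_pos k with rfl | hk
  · rw [← h.st_one, hst 1 le_rfl hkl]
  · have hr : r k = st (k + 1) + (s k ⬝ᵥ (M *ᵥ r k)) • s k := by
      rw [h.st_succ k hk (by omega), sub_add_cancel]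
    rw [hr, add_dotProduct, smul_dotProduct, hst (k + 1) (by omega) hkl, hB k hk hkl.le,
      smul_zero, add_zero]

theorem s_dotProduct_mulVec_residual (h : IsBayesCGRun M m r s st) (hM : M.PosDef)
    (hj : j ≤ m) (hB : ∀ i l, 1 ≤ i → i ≤ l → l ≤ j → s i ⬝ᵥ r l = 0) (hi : i + 1 < j) :
    s (i + 1) ⬝ᵥ (M *ᵥ r j) = 0 := by
  have hα := h.s_succ_dotProduct_residual_ne_zero hM (by omega) fun hi1 =>
    hB i i hi1 le_rfl (by omega)
  have hr : ∀ l < j, r l ⬝ᵥ r j = 0 := fun l hl =>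
    h.residual_dotProduct_residual hM hj (fun i hi1 hil => hB i j hi1 hil le_rfl) hl
  refine (mul_eq_zero.1 ?_).resolve_left hα
  calc (s (i + 1) ⬝ᵥ r i) * (s (i + 1) ⬝ᵥ (M *ᵥ r j)) = (r i - r (i + 1)) ⬝ᵥ r j := by
        rw [h.residual_succ i (by omega), sub_sub_cancel, smul_dotProduct, smul_eq_mul,
          hM.isSymm_of_real.dotProduct_mulVec_comm, dotProduct_comm (M *ᵥ _)]
    _ = 0 := by rw [sub_dotProduct, hr i (by omega), hr (i + 1) hi, sub_zero]

theorem s_dotProduct_mulVec_s_succ (h : IsBayesCGRun M m r s st) (hM : M.PosDef) (hj : j < m)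
    (hO : ∀ i k, 1 ≤ i → i < k → k ≤ j → s i ⬝ᵥ (M *ᵥ s k) = 0)
    (hB : ∀ i l, 1 ≤ i → i ≤ l → l ≤ j → s i ⬝ᵥ r l = 0) (hi : 1 ≤ i) (hij : i ≤ j) :
    s i ⬝ᵥ (M *ᵥ s (j + 1)) = 0 := by
  have hst : s i ⬝ᵥ (M *ᵥ st (j + 1)) = 0 := by
    rw [h.st_succ j (hi.trans hij) hj, mulVec_sub, mulVec_smul, dotProduct_sub, dotProduct_smul,
      smul_eq_mul]
    rcases hij.eq_or_lt with rfl | hij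
    · rw [h.s_dotProduct_mulVec_self hM hi hj.le, mul_one, sub_self]
    · obtain ⟨i, rfl⟩ : ∃ i', i = i' + 1 := ⟨i - 1, by omega⟩
      rw [h.s_dotProduct_mulVec_residual hM hj.le hB hij, hO _ _ hi hij le_rfl, mul_zero,
        sub_zero]
  rw [h.s_eq (j + 1) (by omega) hj, mulVec_smul, dotProduct_smul, hst, smul_zero]

theorem s_dotProduct_residual_succ (h : IsBayesCGRun M m r s st) (hM : M.PosDef) (hj : j < m)
    (hB : ∀ i, 1 ≤ i → i ≤ j → s i ⬝ᵥ r j = 0)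
    (hO : ∀ i, 1 ≤ i → i ≤ j → s i ⬝ᵥ (M *ᵥ s (j + 1)) = 0) (hi : 1 ≤ i) (hij : i ≤ j + 1) :
    s i ⬝ᵥ r (j + 1) = 0 := by
  rw [h.residual_succ j hj, dotProduct_sub, dotProduct_smul, smul_eq_mul]
  rcases hij.eq_or_lt with rfl | hij
  · rw [h.s_dotProduct_mulVec_self hM hi hj, mul_one, sub_self]
  · rw [hB i hi (by omega), hO i hi (by omega), mul_zero, sub_zero]

theorem conjugate_and_orthogonal (h : IsBayesCGRun M m r s st) (hM : M.PosDef) (hj : j ≤ m) :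
    (∀ i k, 1 ≤ i → i < k → k ≤ j → s i ⬝ᵥ (M *ᵥ s k) = 0) ∧
      ∀ i l, 1 ≤ i → i ≤ l → l ≤ j → s i ⬝ᵥ r l = 0 := by
  induction j with
  | zero => exact ⟨fun i k _ _ _ => by omega, fun i l _ _ _ => by omega⟩
  | succ j ih =>
    obtain ⟨hO, hB⟩ := ih (by omega)
    have hO' : ∀ i, 1 ≤ i → i ≤ j → s i ⬝ᵥ (M *ᵥ s (j + 1)) = 0 := fun i =>
      h.s_dotProduct_mulVec_s_succ hM hj hO hB
    have hB' : ∀ i, 1 ≤ i → i ≤ j + 1 → s i ⬝ᵥ r (j + 1) = 0 := fun i =>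
      h.s_dotProduct_residual_succ hM hj (fun i hi hij => hB i j hi hij le_rfl) hO'
    refine ⟨fun i k hi hik hk => ?_, fun i l hi hil hl => ?_⟩
    · rcases hk.eq_or_lt with rfl | hk
      · exact hO' i hi (by omega)
      · exact hO i k hi hik (by omega)
    · rcases hl.eq_or_lt with rfl | hl
      · exact hB' i hi hil
      · exact hB i l hi hil (by omega)

theorem s_dotProduct_mulVec_s (h : IsBayesCGRun M m r s st) (hM : M.PosDef) (hi : 1 ≤ i)
    (him : i ≤ m) (hj : 1 ≤ j) (hjm : j ≤ m) :
    s i ⬝ᵥ (M *ᵥ s j) = if i = j then 1 else 0 := by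
  have hO := (h.conjugate_and_orthogonal hM le_rfl).1
  split_ifs with hij
  · subst hij
    exact h.s_dotProduct_mulVec_self hM hi him
  · rcases Nat.lt_or_gt_of_ne hij with hij | hij
    · exact hO i j hi hij hjm
    · rw [hM.isSymm_of_real.dotProduct_mulVec_comm]
      exact hO j i hj hij him

end IsBayesCGRun

theorem bayescg_directions_orthonormal_general
    (d m : ℕ)
    (A : Matrix (Fin d) (Fin d) ℝ) (hA : IsUnit A)
    (b : Fin d → ℝ)
    (Sigma0 : Matrix (Fin d) (Fin d) ℝ) (hSigma0 : Sigma0.PosDef)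
    (x s st r : ℕ → Fin d → ℝ)
    (hr : ∀ j, j ≤ m → r j = b - A *ᵥ x j)
    (hst1 : st 1 = r 0)
    (hstj : ∀ j, 2 ≤ j → j ≤ m →
      st j = r (j - 1) - (s (j - 1) ⬝ᵥ ((A * Sigma0 * Aᵀ) *ᵥ r (j - 1))) • s (j - 1))
    (hs : ∀ j, 1 ≤ j → j ≤ m →
      s j = (Real.sqrt (st j ⬝ᵥ ((A * Sigma0 * Aᵀ) *ᵥ st j)))⁻¹ • st j)
    (hx : ∀ j, 1 ≤ j → j ≤ m →
      x j = x (j - 1) + (s j ⬝ᵥ r (j - 1)) • ((Sigma0 * Aᵀ) *ᵥ s j))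
    (hnz : ∀ j, 1 ≤ j → j ≤ m → st j ≠ 0) :
    ∀ i j, 1 ≤ i → i ≤ m → 1 ≤ j → j ≤ m →
      s i ⬝ᵥ ((A * Sigma0 * Aᵀ) *ᵥ s j) = if i = j then 1 else 0 := by
  have hM : (A * Sigma0 * Aᵀ).PosDef := by
    simpa [conjTranspose_eq_transpose_of_trivial] using
      hSigma0.mul_mul_conjTranspose_same (vecMul_injective_iff_isUnit.2 hA)
  have run : IsBayesCGRun (A * Sigma0 * Aᵀ) m r s st :=
    { residual_succ := fun k hk => by
        rw [hr (k + 1) hk, hx (k + 1) (by omega) hk, Nat.add_sub_cancel, mulVec_add, mulVec_smul,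
          mulVec_mulVec, ← mul_assoc, sub_add_eq_sub_sub, hr k hk.le]
      st_one := hst1
      st_succ := fun k hk1 hk => by simpa using hstj (k + 1) (by omega) hk
      s_eq := hs
      st_ne_zero := hnz }
  exact fun i j hi him hj hjm => run.s_dotProduct_mulVec_s hM hi him hj hjm

/-- **Proposition 7.** The Bayesian conjugate gradient search directions,
defined by `s̃₁ = r₀`, `s̃_j = r_{j−1} − ⟨s_{j−1}, r_{j−1}⟩_{AΣ₀Aᵀ} s_{j−1}` for `j > 1`,
`s_j = s̃_j / ‖s̃_j‖_{AΣ₀Aᵀ}`, with iterates `x_j = x_{j−1} + Σ₀ Aᵀ s_j (s_jᵀ r_{j−1})` and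
residuals `r_j = b − A x_j`, form an `A Σ₀ Aᵀ`-orthonormal set, provided `s̃_j ≠ 0` for all
`j ≤ m`. -/
theorem bayescg_directions_orthonormal
    (d m : ℕ) (hm : m ≤ d)
    (A : Matrix (Fin d) (Fin d) ℝ) (hA : IsUnit A)
    (b : Fin d → ℝ)
    (Sigma0 : Matrix (Fin d) (Fin d) ℝ) (hSigma0 : Sigma0.PosDef)
    (x0 : Fin d → ℝ)
    (x s st r : ℕ → Fin d → ℝ)
    (hx0 : x 0 = x0)
    (hr : ∀ j, j ≤ m → r j = b - A *ᵥ x j)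
    (hst1 : st 1 = r 0)
    (hstj : ∀ j, 2 ≤ j → j ≤ m →
      st j = r (j - 1) - (s (j - 1) ⬝ᵥ ((A * Sigma0 * Aᵀ) *ᵥ r (j - 1))) • s (j - 1))
    (hs : ∀ j, 1 ≤ j → j ≤ m →
      s j = (Real.sqrt (st j ⬝ᵥ ((A * Sigma0 * Aᵀ) *ᵥ st j)))⁻¹ • st j)
    (hx : ∀ j, 1 ≤ j → j ≤ m →
      x j = x (j - 1) + (s j ⬝ᵥ r (j - 1)) • ((Sigma0 * Aᵀ) *ᵥ s j))
    (hnz : ∀ j, 1 ≤ j → j ≤ m → st j ≠ 0) :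
    ∀ i j, 1 ≤ i → i ≤ m → 1 ≤ j → j ≤ m →
      s i ⬝ᵥ ((A * Sigma0 * Aᵀ) *ᵥ s j) = if i = j then 1 else 0 :=
  bayescg_directions_orthonormal_general d m A hA b Sigma0 hSigma0 x s st r hr hst1 hstj hs hx hnz
end

section
/- (Krylov subspace membership, part of Proposition 8) Let x_m be the BayesCG posterior mean computed with the search directions of Proposition 7 (s̃₁ = r₀; s̃_j = r_{j−1} − ⟨s_{j−1}, r_{j−1}⟩_{AΣ₀Aᵀ} s_{j−1}; s_j = s̃_j/‖s̃_j‖_{AΣ₀Aᵀ}; x_j = x_{j−1} + Σ₀ Aᵀ s_j (s_jᵀ r_{j−1})), assuming s̃_j ≠ 0 for j ≤ m. Then x_m lies in the shifted Krylov subspace x₀ + K_{m−1}(Σ₀ Aᵀ A, Σ₀ Aᵀ r₀), where K_n(M, v) = span(v, M v, …, Mⁿ v). -/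
open Matrix

/-- **Krylov subspace membership, part of Proposition 8.** The BayesCG
posterior mean `x_m`, computed with the search directions of Proposition 7, lies in the
shifted Krylov subspace `x₀ + K_{m−1}(Σ₀ Aᵀ A, Σ₀ Aᵀ r₀)`, where
`K_n(M, v) = span(v, M v, …, Mⁿ v)`. -/
theorem bayescg_mean_in_krylov
    (d m : ℕ) (hm : m ≤ d)
    (A : Matrix (Fin d) (Fin d) ℝ) (hA : IsUnit A)
    (b : Fin d → ℝ)
    (Sigma0 : Matrix (Fin d) (Fin d) ℝ) (hSigma0 : Sigma0.PosDef)
    (x0 : Fin d → ℝ)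
    (x s st r : ℕ → Fin d → ℝ)
    (hx0 : x 0 = x0)
    (hr : ∀ j, j ≤ m → r j = b - A *ᵥ x j)
    (hst1 : st 1 = r 0)
    (hstj : ∀ j, 2 ≤ j → j ≤ m →
      st j = r (j - 1) - (s (j - 1) ⬝ᵥ ((A * Sigma0 * Aᵀ) *ᵥ r (j - 1))) • s (j - 1))
    (hs : ∀ j, 1 ≤ j → j ≤ m →
      s j = (Real.sqrt (st j ⬝ᵥ ((A * Sigma0 * Aᵀ) *ᵥ st j)))⁻¹ • st j)
    (hx : ∀ j, 1 ≤ j → j ≤ m →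
      x j = x (j - 1) + (s j ⬝ᵥ r (j - 1)) • ((Sigma0 * Aᵀ) *ᵥ s j))
    (hnz : ∀ j, 1 ≤ j → j ≤ m → st j ≠ 0) :
    x m - x0 ∈ Submodule.span ℝ
      (Set.range fun i : Fin m =>
        ((Sigma0 * Aᵀ * A) ^ (i : ℕ)) *ᵥ ((Sigma0 * Aᵀ) *ᵥ (b - A *ᵥ x0))) := by
  set P := Sigma0 * Aᵀ with hPdef
  set M := Sigma0 * Aᵀ * A with hMdef
  set N := A * Sigma0 * Aᵀ with hNdef
  set r0 : Fin d → ℝ := b - A *ᵥ x0 with hr0def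
  have hAP : A * P = N := by rw [hPdef, hNdef, mul_assoc]
  have hMP : ∀ i : ℕ, P * N ^ i = M ^ i * P := by
    intro i
    have h : SemiconjBy P N M := by
      simp only [SemiconjBy, hPdef, hMdef, hNdef, mul_assoc]
    exact h.pow_right i
  let Kx : ℕ → Submodule ℝ (Fin d → ℝ) := fun n =>
    Submodule.span ℝ ((fun i : ℕ => M ^ i *ᵥ (P *ᵥ r0)) '' Set.Iio n)
  let Kr : ℕ → Submodule ℝ (Fin d → ℝ) := fun n =>
    Submodule.span ℝ ((fun i : ℕ => N ^ i *ᵥ r0) '' Set.Iio n)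
  have Kx_mono : ∀ {a c : ℕ}, a ≤ c → Kx a ≤ Kx c := fun h =>
    Submodule.span_mono (Set.image_mono (Set.Iio_subset_Iio h))
  have Kr_mono : ∀ {a c : ℕ}, a ≤ c → Kr a ≤ Kr c := fun h =>
    Submodule.span_mono (Set.image_mono (Set.Iio_subset_Iio h))
  have Kx_mem : ∀ i n : ℕ, i < n → M ^ i *ᵥ (P *ᵥ r0) ∈ Kx n := fun i n hi =>
    Submodule.subset_span ⟨i, hi, rfl⟩
  have Kr_mem : ∀ i n : ℕ, i < n → N ^ i *ᵥ r0 ∈ Kr n := fun i n hi =>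
    Submodule.subset_span ⟨i, hi, rfl⟩
  have hr0K : ∀ n : ℕ, 0 < n → r0 ∈ Kr n := by
    intro n hn
    have := Kr_mem 0 n hn
    simpa using this
  have hPmap : ∀ n (w : Fin d → ℝ), w ∈ Kr n → P *ᵥ w ∈ Kx n := by
    intro n w hw
    have hle : Kr n ≤ (Kx n).comap (Matrix.mulVecLin P) := by
      rw [Submodule.span_le]
      rintro _ ⟨i, hi, rfl⟩
      simp only [SetLike.mem_coe, Submodule.mem_comap, Matrix.mulVecLin_apply]
      rw [Matrix.mulVec_mulVec, hMP i, ← Matrix.mulVec_mulVec]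
      exact Kx_mem i n hi
    simpa using hle hw
  have hAmap : ∀ n (w : Fin d → ℝ), w ∈ Kx n → A *ᵥ w ∈ Kr (n + 1) := by
    intro n w hw
    have hle : Kx n ≤ (Kr (n + 1)).comap (Matrix.mulVecLin A) := by
      rw [Submodule.span_le]
      rintro _ ⟨i, hi, rfl⟩
      simp only [SetLike.mem_coe, Submodule.mem_comap, Matrix.mulVecLin_apply]
      have key : A *ᵥ (M ^ i *ᵥ (P *ᵥ r0)) = N ^ (i + 1) *ᵥ r0 := by
        rw [Matrix.mulVec_mulVec, Matrix.mulVec_mulVec, mul_assoc, ← hMP i, ← mul_assoc,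
          hAP, ← pow_succ']
      rw [key]
      exact Kr_mem (i + 1) (n + 1) (Nat.succ_lt_succ hi)
    simpa using hle hw
  have key : ∀ j, j ≤ m →
      (x j - x0 ∈ Kx j) ∧ (r j ∈ Kr (j + 1)) ∧ (1 ≤ j → s j ∈ Kr j) := by
    intro j
    induction j with
    | zero =>
      intro hj
      refine ⟨by simp [hx0], ?_, by omega⟩
      have h0 : r 0 = r0 := by rw [hr 0 hj, hx0]
      rw [h0]
      exact hr0K 1 one_pos
    | succ j ih =>
      intro hj
      have hj' : j ≤ m := by omega
      obtain ⟨ihx, ihr, ihs⟩ := ih hj'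
      have hstK : st (j + 1) ∈ Kr (j + 1) := by
        rcases Nat.eq_zero_or_pos j with h0 | hpos
        · subst h0
          rw [hst1]
          exact ihr
        · have heq := hstj (j + 1) (by omega) hj
          simp only [Nat.add_sub_cancel] at heq
          rw [heq]
          exact Submodule.sub_mem _ ihr
            (Submodule.smul_mem _ _ ((Kr_mono (Nat.le_succ j)) (ihs hpos)))
      have hsK : s (j + 1) ∈ Kr (j + 1) := by
        rw [hs (j + 1) (by omega) hj]
        exact Submodule.smul_mem _ _ hstK
      have hxK : x (j + 1) - x0 ∈ Kx (j + 1) := by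
        have heq := hx (j + 1) (by omega) hj
        simp only [Nat.add_sub_cancel] at heq
        have heq2 : x (j + 1) - x0 = (x j - x0) + (s (j + 1) ⬝ᵥ r j) • (P *ᵥ s (j + 1)) := by
          rw [heq]; abel
        rw [heq2]
        exact Submodule.add_mem _ (Kx_mono (Nat.le_succ j) ihx)
          (Submodule.smul_mem _ _ (hPmap (j + 1) _ hsK))
      refine ⟨hxK, ?_, fun _ => hsK⟩
      have hrj : r (j + 1) = r0 - A *ᵥ (x (j + 1) - x0) := by
        rw [hr (j + 1) hj, hr0def, Matrix.mulVec_sub]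
        abel
      rw [hrj]
      exact Submodule.sub_mem _ (hr0K (j + 2) (by omega)) (hAmap (j + 1) _ hxK)
  have hset : (Set.range fun i : Fin m => (M ^ (i : ℕ)) *ᵥ (P *ᵥ r0)) =
      (fun i : ℕ => M ^ i *ᵥ (P *ᵥ r0)) '' Set.Iio m := by
    ext w
    constructor
    · rintro ⟨i, rfl⟩; exact ⟨i, i.isLt, rfl⟩
    · rintro ⟨i, hi, rfl⟩; exact ⟨⟨i, hi⟩, rfl⟩
  rw [hset]
  exact (key m le_rfl).1
end

section
/- (Proposition 8) Let x_m be the BayesCG posterior mean computed with the search directions of Proposition 7 (assuming s̃_j ≠ 0 for j ≤ m), and let x* = A⁻¹ b. Then x_m minimises ‖x − x*‖_{Σ₀⁻¹} over the shifted Krylov subspace x₀ + K_{m−1}(Σ₀ Aᵀ A, Σ₀ Aᵀ r₀): for every x in this subspace, ‖x_m − x*‖_{Σ₀⁻¹} ≤ ‖x − x*‖_{Σ₀⁻¹}. -/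
/-!
Write `N = A Σ₀ Aᵀ`. As for conjugate gradients, a joint induction shows that the directions
`s_j` are `N`-orthonormal and that `r_j` is orthogonal to `s_1, …, s_j`. Since `N s_{k+1}` is a
multiple of `r_k - r_{k+1}`, the span of `s_1, …, s_m` contains `Nⁱ r₀` for `i < m`; hence both
`x_m - x₀` and the Krylov space lie in `W = Σ₀ Aᵀ span(s_1, …, s_m)`. For `w = Σ₀ Aᵀ u` we get
`⟨x_m - x*, w⟩_{Σ₀⁻¹} = (A (x_m - x*))ᵀ u = -r_mᵀ u = 0`, and Pythagoras in the `Σ₀⁻¹`-norm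
concludes.
-/

open Matrix

variable {ι : Type*}

def searchSpan (s : ℕ → ι → ℝ) (n : ℕ) : Submodule ℝ (ι → ℝ) :=
  Submodule.span ℝ (s '' Set.Icc 1 n)

lemma searchSpan_mono (s : ℕ → ι → ℝ) {n n' : ℕ} (h : n ≤ n') :
    searchSpan s n ≤ searchSpan s n' :=
  Submodule.span_mono (Set.image_mono (Set.Icc_subset_Icc_right h))

lemma mem_searchSpan {s : ℕ → ι → ℝ} {k n : ℕ} (h1 : 1 ≤ k) (hn : k ≤ n) :
    s k ∈ searchSpan s n :=
  Submodule.subset_span ⟨k, ⟨h1, hn⟩, rfl⟩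

variable [Fintype ι]

lemma Matrix.IsSymm.dotProduct_mulVec_comm_s14 {R : Type*} [CommSemiring R] {M : Matrix ι ι R}
    (hM : M.IsSymm) (u v : ι → R) : u ⬝ᵥ (M *ᵥ v) = v ⬝ᵥ (M *ᵥ u) := by
  rw [dotProduct_mulVec, ← mulVec_transpose, hM.eq, dotProduct_comm]

lemma dotProduct_eq_zero_of_mem_searchSpan {s : ℕ → ι → ℝ} {n : ℕ} {w u : ι → ℝ}
    (hw : ∀ i, 1 ≤ i → i ≤ n → w ⬝ᵥ s i = 0) (hu : u ∈ searchSpan s n) : w ⬝ᵥ u = 0 := by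
  refine (Submodule.span_le (p := LinearMap.ker (dotProductBilin ℝ ℝ w))).2 ?_ hu
  rintro _ ⟨i, ⟨h1, hn⟩, rfl⟩
  exact hw i h1 hn

/-- The BayesCG recurrences, with `N` standing for `A Σ₀ Aᵀ` and the update of the iterates
replaced by the update of the residuals that it induces. -/
structure IsBayesCGDirections (N : Matrix ι ι ℝ) (m : ℕ) (r s st : ℕ → ι → ℝ) : Prop where
  st_one : st 1 = r 0
  st_succ : ∀ j, 1 ≤ j → j + 1 ≤ m → st (j + 1) = r j - (s j ⬝ᵥ (N *ᵥ r j)) • s j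
  s_eq : ∀ j, 1 ≤ j → j ≤ m → s j = (√(st j ⬝ᵥ (N *ᵥ st j)))⁻¹ • st j
  r_succ : ∀ j, j + 1 ≤ m → r (j + 1) = r j - (s (j + 1) ⬝ᵥ r j) • (N *ᵥ s (j + 1))
  st_ne_zero : ∀ j, 1 ≤ j → j ≤ m → st j ≠ 0

namespace IsBayesCGDirections

variable {N : Matrix ι ι ℝ} {m : ℕ} {r s st : ℕ → ι → ℝ}

lemma sqrt_pos (h : IsBayesCGDirections N m r s st) (hN : N.PosDef) {j : ℕ} (h1 : 1 ≤ j)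
    (hj : j ≤ m) : 0 < √(st j ⬝ᵥ (N *ᵥ st j)) :=
  Real.sqrt_pos.2 (by simpa using hN.dotProduct_mulVec_pos (h.st_ne_zero j h1 hj))

lemma st_eq_smul (h : IsBayesCGDirections N m r s st) (hN : N.PosDef) {j : ℕ} (h1 : 1 ≤ j)
    (hj : j ≤ m) : st j = √(st j ⬝ᵥ (N *ᵥ st j)) • s j := by
  rw [h.s_eq j h1 hj, smul_smul, mul_inv_cancel₀ (h.sqrt_pos hN h1 hj).ne', one_smul]

lemma s_dotProduct_mulVec_s (h : IsBayesCGDirections N m r s st) (hN : N.PosDef) {j : ℕ}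
    (h1 : 1 ≤ j) (hj : j ≤ m) : s j ⬝ᵥ (N *ᵥ s j) = 1 := by
  have hq := h.sqrt_pos hN h1 hj
  have hsq := Real.sq_sqrt (Real.sqrt_pos.1 hq).le
  rw [h.s_eq j h1 hj, smul_dotProduct, mulVec_smul, dotProduct_smul, smul_eq_mul, smul_eq_mul]
  field_simp
  exact hsq.symm

lemma r_ne_zero (h : IsBayesCGDirections N m r s st) {t : ℕ} (ht : t < m) : r t ≠ 0 := by
  cases t with
  | zero => exact h.st_one ▸ h.st_ne_zero 1 le_rfl ht
  | succ t =>
    intro h0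
    apply h.st_ne_zero (t + 2) (by omega) ht
    simp [h.st_succ (t + 1) (by omega) ht, h0]

lemma r_mem_searchSpan (h : IsBayesCGDirections N m r s st) (hN : N.PosDef) {t : ℕ}
    (ht : t + 1 ≤ m) : r t ∈ searchSpan s (t + 1) := by
  have hst := h.st_eq_smul hN (Nat.le_add_left 1 t) ht
  cases t with
  | zero =>
    rw [← h.st_one, hst]
    exact Submodule.smul_mem _ _ (mem_searchSpan le_rfl le_rfl)
  | succ t =>
    rw [h.st_succ (t + 1) (by omega) ht, sub_eq_iff_eq_add] at hst
    rw [hst]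
    exact add_mem (Submodule.smul_mem _ _ (mem_searchSpan (by omega) le_rfl))
      (Submodule.smul_mem _ _ (mem_searchSpan (by omega) (by omega)))

lemma s_succ_dotProduct_r_pos (h : IsBayesCGDirections N m r s st) (hN : N.PosDef) {k : ℕ}
    (hk : k + 1 ≤ m) (horth : ∀ i, 1 ≤ i → i ≤ k → r k ⬝ᵥ s i = 0) :
    0 < s (k + 1) ⬝ᵥ r k := by
  have hst : st (k + 1) ⬝ᵥ r k = r k ⬝ᵥ r k := by
    cases k with
    | zero => rw [h.st_one]
    | succ k =>
      rw [h.st_succ (k + 1) (by omega) hk, sub_dotProduct, smul_dotProduct,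
        dotProduct_comm (s (k + 1)) (r (k + 1)), horth (k + 1) (by omega) le_rfl, smul_zero,
        sub_zero]
  rw [h.s_eq (k + 1) (by omega) hk, smul_dotProduct, smul_eq_mul, hst]
  exact mul_pos (inv_pos.2 (h.sqrt_pos hN (by omega) hk))
    (by simpa using dotProduct_star_self_pos_iff.2 (h.r_ne_zero (by omega)))

lemma mulVec_s_succ (h : IsBayesCGDirections N m r s st) (hN : N.PosDef) {k : ℕ}
    (hk : k + 1 ≤ m) (horth : ∀ i, 1 ≤ i → i ≤ k → r k ⬝ᵥ s i = 0) :
    N *ᵥ s (k + 1) = (s (k + 1) ⬝ᵥ r k)⁻¹ • (r k - r (k + 1)) := by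
  rw [h.r_succ k hk, sub_sub_cancel, smul_smul,
    inv_mul_cancel₀ (h.s_succ_dotProduct_r_pos hN hk horth).ne', one_smul]

lemma conjugate_succ (h : IsBayesCGDirections N m r s st) (hN : N.PosDef) {j : ℕ}
    (hjm : j + 1 ≤ m) (horth : ∀ t ≤ j, ∀ i, 1 ≤ i → i ≤ t → r t ⬝ᵥ s i = 0)
    (hconj : ∀ k, 1 ≤ k → k < j → s j ⬝ᵥ (N *ᵥ s k) = 0) :
    ∀ k, 1 ≤ k → k < j + 1 → s (j + 1) ⬝ᵥ (N *ᵥ s k) = 0 := by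
  intro k hk hkj
  have hj : 1 ≤ j := by omega
  have hNsymm : N.IsSymm := isHermitian_iff_isSymm.1 hN.isHermitian
  suffices hst : st (j + 1) ⬝ᵥ (N *ᵥ s k) = 0 by
    rw [h.s_eq (j + 1) (by omega) hjm, smul_dotProduct, hst, smul_zero]
  rw [h.st_succ j hj hjm, sub_dotProduct, smul_dotProduct, smul_eq_mul]
  obtain rfl | hkj := (Nat.lt_succ_iff.1 hkj).eq_or_lt
  · rw [h.s_dotProduct_mulVec_s hN hk (by omega), mul_one, hNsymm.dotProduct_mulVec_comm_s14, sub_self]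
  obtain ⟨k, rfl⟩ : ∃ k', k = k' + 1 := ⟨k - 1, by omega⟩
  -- `N s_{k+1}` is a combination of `r_k` and `r_{k+1}`, both in the span of `s_1, …, s_j`.
  have hr : r j ⬝ᵥ (N *ᵥ s (k + 1)) = 0 := by
    rw [h.mulVec_s_succ hN (by omega) (horth k (by omega)), dotProduct_smul, dotProduct_sub,
      dotProduct_eq_zero_of_mem_searchSpan (horth j le_rfl)
        (searchSpan_mono s (by omega) (h.r_mem_searchSpan hN (by omega))),
      dotProduct_eq_zero_of_mem_searchSpan (horth j le_rfl)
        (searchSpan_mono s (by omega) (h.r_mem_searchSpan hN (by omega))),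
      sub_zero, smul_zero]
  rw [hr, hconj (k + 1) hk hkj, mul_zero, sub_zero]

lemma orthogonal_succ (h : IsBayesCGDirections N m r s st) (hN : N.PosDef) {j : ℕ}
    (hjm : j + 1 ≤ m) (horth : ∀ i, 1 ≤ i → i ≤ j → r j ⬝ᵥ s i = 0)
    (hconj : ∀ k, 1 ≤ k → k < j + 1 → s (j + 1) ⬝ᵥ (N *ᵥ s k) = 0) :
    ∀ i, 1 ≤ i → i ≤ j + 1 → r (j + 1) ⬝ᵥ s i = 0 := by
  intro i hi hij
  have hNsymm : N.IsSymm := isHermitian_iff_isSymm.1 hN.isHermitian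
  rw [h.r_succ j hjm, sub_dotProduct, smul_dotProduct, smul_eq_mul, dotProduct_comm (N *ᵥ _),
    hNsymm.dotProduct_mulVec_comm_s14]
  obtain rfl | hij := hij.eq_or_lt
  · rw [h.s_dotProduct_mulVec_s hN hi hjm, mul_one, dotProduct_comm, sub_self]
  · rw [horth i hi (by omega), hconj i hi hij, mul_zero, sub_zero]

lemma orthogonal_and_conjugate (h : IsBayesCGDirections N m r s st) (hN : N.PosDef) :
    ∀ j ≤ m, (∀ i, 1 ≤ i → i ≤ j → r j ⬝ᵥ s i = 0) ∧
      (∀ k, 1 ≤ k → k < j → s j ⬝ᵥ (N *ᵥ s k) = 0) := by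
  intro j
  induction j using Nat.strong_induction_on with
  | _ j ih =>
    intro hjm
    cases j with
    | zero => exact ⟨fun i hi hij => by omega, fun k hk hkj => by omega⟩
    | succ j =>
      have hconj := h.conjugate_succ hN hjm (fun t ht => (ih t (by omega) (by omega)).1)
        (ih j (by omega) (by omega)).2
      exact ⟨h.orthogonal_succ hN hjm (ih j (by omega) (by omega)).1 hconj, hconj⟩

lemma r_dotProduct_eq_zero (h : IsBayesCGDirections N m r s st) (hN : N.PosDef) {u : ι → ℝ}
    (hu : u ∈ searchSpan s m) : r m ⬝ᵥ u = 0 :=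
  dotProduct_eq_zero_of_mem_searchSpan (h.orthogonal_and_conjugate hN m le_rfl).1 hu

lemma mulVec_mem_searchSpan_succ (h : IsBayesCGDirections N m r s st) (hN : N.PosDef)
    {n : ℕ} (hn : n + 1 ≤ m) {u : ι → ℝ} (hu : u ∈ searchSpan s n) :
    N *ᵥ u ∈ searchSpan s (n + 1) := by
  refine (Submodule.span_le (p := (searchSpan s (n + 1)).comap N.mulVecLin)).2 ?_ hu
  rintro _ ⟨k, ⟨hk, hkn⟩, rfl⟩
  obtain ⟨k, rfl⟩ : ∃ k', k = k' + 1 := ⟨k - 1, by omega⟩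
  show N *ᵥ s (k + 1) ∈ searchSpan s (n + 1)
  rw [h.mulVec_s_succ hN (by omega) (h.orthogonal_and_conjugate hN k (by omega)).1]
  exact Submodule.smul_mem _ _ (sub_mem
    (searchSpan_mono s (by omega) (h.r_mem_searchSpan hN (by omega)))
    (searchSpan_mono s (by omega) (h.r_mem_searchSpan hN (by omega))))

lemma pow_mulVec_r_zero_mem_searchSpan [DecidableEq ι] (h : IsBayesCGDirections N m r s st)
    (hN : N.PosDef) {i : ℕ} (hi : i < m) : (N ^ i) *ᵥ r 0 ∈ searchSpan s m := by
  refine searchSpan_mono s hi ?_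
  induction i with
  | zero => simpa using h.r_mem_searchSpan hN (by omega)
  | succ i ih =>
    rw [pow_succ', ← mulVec_mulVec]
    exact h.mulVec_mem_searchSpan_succ hN hi (ih (by omega))

end IsBayesCGDirections

lemma residual_succ {A P : Matrix ι ι ℝ} {b : ι → ℝ} {m : ℕ} {x s r : ℕ → ι → ℝ}
    (hr : ∀ j, j ≤ m → r j = b - A *ᵥ x j)
    (hx : ∀ j, 1 ≤ j → j ≤ m → x j = x (j - 1) + (s j ⬝ᵥ r (j - 1)) • (P *ᵥ s j))
    {j : ℕ} (hj : j + 1 ≤ m) :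
    r (j + 1) = r j - (s (j + 1) ⬝ᵥ r j) • ((A * P) *ᵥ s (j + 1)) := by
  rw [hr (j + 1) hj, hx (j + 1) (by omega) hj, Nat.add_sub_cancel, hr j (by omega), mulVec_add,
    mulVec_smul, mulVec_mulVec]
  abel

lemma sub_mem_map_searchSpan {P : Matrix ι ι ℝ} {m : ℕ} {x s r : ℕ → ι → ℝ}
    (hx : ∀ j, 1 ≤ j → j ≤ m → x j = x (j - 1) + (s j ⬝ᵥ r (j - 1)) • (P *ᵥ s j))
    {j : ℕ} (hj : j ≤ m) : x j - x 0 ∈ (searchSpan s j).map P.mulVecLin := by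
  induction j with
  | zero => simp
  | succ j ih =>
    rw [hx (j + 1) (by omega) hj, Nat.add_sub_cancel, add_sub_right_comm]
    exact add_mem (Submodule.map_mono (searchSpan_mono s j.le_succ) (ih (by omega)))
      (Submodule.smul_mem _ _ (Submodule.mem_map_of_mem (mem_searchSpan (by omega) le_rfl)))

lemma dotProduct_inv_mulVec_mul_transpose [DecidableEq ι] {S : Matrix ι ι ℝ} (hS : IsUnit S)
    (A : Matrix ι ι ℝ) (e u : ι → ℝ) : e ⬝ᵥ (S⁻¹ *ᵥ ((S * Aᵀ) *ᵥ u)) = (A *ᵥ e) ⬝ᵥ u := by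
  rw [mulVec_mulVec, ← Matrix.mul_assoc, nonsing_inv_mul S ((isUnit_iff_isUnit_det S).1 hS),
    Matrix.one_mul, dotProduct_mulVec, vecMul_transpose]

lemma matNorm_le_matNorm_add {d : ℕ} {M : Matrix (Fin d) (Fin d) ℝ} (hM : M.PosSemidef)
    {e w : Fin d → ℝ} (h : e ⬝ᵥ (M *ᵥ w) = 0) : matNorm M e ≤ matNorm M (e + w) := by
  have hsymm : M.IsSymm := isHermitian_iff_isSymm.1 hM.isHermitian
  have hw : 0 ≤ w ⬝ᵥ (M *ᵥ w) := by simpa using hM.dotProduct_mulVec_nonneg w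
  refine Real.sqrt_le_sqrt ?_
  rw [mulVec_add, dotProduct_add, add_dotProduct, add_dotProduct, h,
    hsymm.dotProduct_mulVec_comm_s14 w e, h]
  linarith

theorem bayescg_mean_minimises_over_krylov_general
    (d m : ℕ)
    (A : Matrix (Fin d) (Fin d) ℝ) (hA : IsUnit A)
    (b : Fin d → ℝ) (xstar : Fin d → ℝ) (hxstar : xstar = A⁻¹ *ᵥ b)
    (Sigma0 : Matrix (Fin d) (Fin d) ℝ) (hSigma0 : Sigma0.PosDef)
    (x0 : Fin d → ℝ)
    (x s st r : ℕ → Fin d → ℝ)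
    (hx0 : x 0 = x0)
    (hr : ∀ j, j ≤ m → r j = b - A *ᵥ x j)
    (hst1 : st 1 = r 0)
    (hstj : ∀ j, 2 ≤ j → j ≤ m →
      st j = r (j - 1) - (s (j - 1) ⬝ᵥ ((A * Sigma0 * Aᵀ) *ᵥ r (j - 1))) • s (j - 1))
    (hs : ∀ j, 1 ≤ j → j ≤ m →
      s j = (Real.sqrt (st j ⬝ᵥ ((A * Sigma0 * Aᵀ) *ᵥ st j)))⁻¹ • st j)
    (hx : ∀ j, 1 ≤ j → j ≤ m →
      x j = x (j - 1) + (s j ⬝ᵥ r (j - 1)) • ((Sigma0 * Aᵀ) *ᵥ s j))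
    (hnz : ∀ j, 1 ≤ j → j ≤ m → st j ≠ 0) :
    ∀ v ∈ Submodule.span ℝ
      (Set.range fun i : Fin m =>
        ((Sigma0 * Aᵀ * A) ^ (i : ℕ)) *ᵥ ((Sigma0 * Aᵀ) *ᵥ (b - A *ᵥ x0))),
      matNorm Sigma0⁻¹ (x m - xstar) ≤ matNorm Sigma0⁻¹ ((x0 + v) - xstar) := by
  intro v hv
  have hN : (A * Sigma0 * Aᵀ).PosDef := by
    simpa using hSigma0.mul_mul_conjTranspose_same (vecMul_injective_iff_isUnit.2 hA)
  have hdir : IsBayesCGDirections (A * Sigma0 * Aᵀ) m r s st :=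
    { st_one := hst1
      st_succ := fun j _ hjm => hstj (j + 1) (by omega) hjm
      s_eq := hs
      r_succ := fun j hj => by rw [residual_succ hr hx hj, Matrix.mul_assoc]
      st_ne_zero := hnz }
  set W := (searchSpan s m).map (Sigma0 * Aᵀ).mulVecLin
  have hxW : x m - x0 ∈ W := hx0 ▸ sub_mem_map_searchSpan hx le_rfl
  have hvW : v ∈ W := by
    refine Submodule.span_le.2 ?_ hv
    rintro _ ⟨i, rfl⟩
    refine ⟨_, hdir.pow_mulVec_r_zero_mem_searchSpan hN i.isLt, ?_⟩
    dsimp only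
    rw [mulVecLin_apply, hr 0 (Nat.zero_le m), hx0, mulVec_mulVec, mulVec_mulVec, mul_pow_mul,
      Matrix.mul_assoc A]
  have horth : ∀ w ∈ W, (x m - xstar) ⬝ᵥ (Sigma0⁻¹ *ᵥ w) = 0 := by
    rintro _ ⟨u, hu, rfl⟩
    have he : A *ᵥ (x m - xstar) = -r m := by
      rw [hr m le_rfl, hxstar, mulVec_sub, mulVec_mulVec,
        mul_nonsing_inv A ((isUnit_iff_isUnit_det A).1 hA), one_mulVec, neg_sub]
    rw [mulVecLin_apply, dotProduct_inv_mulVec_mul_transpose hSigma0.isUnit, he, neg_dotProduct,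
      hdir.r_dotProduct_eq_zero hN hu, neg_zero]
  calc matNorm Sigma0⁻¹ (x m - xstar)
      ≤ matNorm Sigma0⁻¹ ((x m - xstar) + (v - (x m - x0))) :=
        matNorm_le_matNorm_add hSigma0.inv.posSemidef (horth _ (sub_mem hvW hxW))
    _ = matNorm Sigma0⁻¹ ((x0 + v) - xstar) := by congr 1; abel

/-- **Proposition 8.** The BayesCG posterior mean `x_m`, computed with the
search directions of Proposition 7, minimises `‖x − x*‖_{Σ₀⁻¹}` over the shifted Krylov
subspace `x₀ + K_{m−1}(Σ₀ Aᵀ A, Σ₀ Aᵀ r₀)`, where `x* = A⁻¹ b`. -/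
theorem bayescg_mean_minimises_over_krylov
    (d m : ℕ) (hm : m ≤ d)
    (A : Matrix (Fin d) (Fin d) ℝ) (hA : IsUnit A)
    (b : Fin d → ℝ) (xstar : Fin d → ℝ) (hxstar : xstar = A⁻¹ *ᵥ b)
    (Sigma0 : Matrix (Fin d) (Fin d) ℝ) (hSigma0 : Sigma0.PosDef)
    (x0 : Fin d → ℝ)
    (x s st r : ℕ → Fin d → ℝ)
    (hx0 : x 0 = x0)
    (hr : ∀ j, j ≤ m → r j = b - A *ᵥ x j)
    (hst1 : st 1 = r 0)
    (hstj : ∀ j, 2 ≤ j → j ≤ m →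
      st j = r (j - 1) - (s (j - 1) ⬝ᵥ ((A * Sigma0 * Aᵀ) *ᵥ r (j - 1))) • s (j - 1))
    (hs : ∀ j, 1 ≤ j → j ≤ m →
      s j = (Real.sqrt (st j ⬝ᵥ ((A * Sigma0 * Aᵀ) *ᵥ st j)))⁻¹ • st j)
    (hx : ∀ j, 1 ≤ j → j ≤ m →
      x j = x (j - 1) + (s j ⬝ᵥ r (j - 1)) • ((Sigma0 * Aᵀ) *ᵥ s j))
    (hnz : ∀ j, 1 ≤ j → j ≤ m → st j ≠ 0) :
    ∀ v ∈ Submodule.span ℝ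
      (Set.range fun i : Fin m =>
        ((Sigma0 * Aᵀ * A) ^ (i : ℕ)) *ᵥ ((Sigma0 * Aᵀ) *ᵥ (b - A *ᵥ x0))),
      matNorm Sigma0⁻¹ (x m - xstar) ≤ matNorm Sigma0⁻¹ ((x0 + v) - xstar) :=
  bayescg_mean_minimises_over_krylov_general d m A hA b xstar hxstar Sigma0 hSigma0 x0 x s st r hx0
    hr hst1 hstj hs hx hnz
end

section
/- (Natural prior gives convergence in one iteration) Suppose the prior covariance is Σ₀ = (Aᵀ A)⁻¹ and the first BayesCG search direction is s₁ = r₀/‖r₀‖₂ with r₀ = b − A x₀ ≠ 0. Then the first iterate x₁ = x₀ + Σ₀ Aᵀ s₁ (s₁ᵀ r₀) equals the exact solution: x₁ = x* = A⁻¹ b. -/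
open Matrix

section

variable {n : Type*} [Fintype n]

theorem dotProduct_smul_normalize_self (v : n → ℝ) :
    let s := (Real.sqrt (v ⬝ᵥ v))⁻¹ • v
    (s ⬝ᵥ v) • s = v := by
  intro s
  by_cases hv : v = 0
  -- `s = 0` here, because `Real.sqrt 0 = 0` and `0⁻¹ = 0`
  · simp [s, hv]
  have hpos : 0 < v ⬝ᵥ v := by
    simpa using dotProduct_star_self_pos_iff.mpr hv
  calc (s ⬝ᵥ v) • s
      = ((Real.sqrt (v ⬝ᵥ v))⁻¹ * (v ⬝ᵥ v) * (Real.sqrt (v ⬝ᵥ v))⁻¹) • v := by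
        simp only [s, smul_dotProduct, smul_smul, smul_eq_mul]
    _ = v := by
        rw [mul_right_comm, ← mul_inv, Real.mul_self_sqrt hpos.le, inv_mul_cancel₀ hpos.ne',
          one_smul]

variable [DecidableEq n] {R : Type*} [CommRing R]

theorem inv_transpose_mul_self_mul_transpose (A : Matrix n n R) :
    (Aᵀ * A)⁻¹ * Aᵀ = A⁻¹ := by
  by_cases hA : IsUnit A.det
  · rw [Matrix.mul_inv_rev, Matrix.mul_assoc, nonsing_inv_mul _ (by simpa using hA),
      Matrix.mul_one]
  · simp [Matrix.mul_inv_rev, nonsing_inv_apply_not_isUnit A hA]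

theorem add_inv_mulVec_residual {A : Matrix n n R} (hA : IsUnit A) (b x : n → R) :
    x + A⁻¹ *ᵥ (b - A *ᵥ x) = A⁻¹ *ᵥ b := by
  rw [mulVec_sub, mulVec_mulVec, nonsing_inv_mul _ ((isUnit_iff_isUnit_det A).mp hA),
    one_mulVec, add_sub_cancel]

end

theorem natural_prior_one_step_convergence_general
    (d : ℕ)
    (A : Matrix (Fin d) (Fin d) ℝ) (hA : IsUnit A)
    (b : Fin d → ℝ)
    (x0 : Fin d → ℝ)
    (r0 : Fin d → ℝ) (hr0 : r0 = b - A *ᵥ x0)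
    (Sigma0 : Matrix (Fin d) (Fin d) ℝ) (hSigma0 : Sigma0 = (Aᵀ * A)⁻¹)
    (s1 : Fin d → ℝ) (hs1 : s1 = (Real.sqrt (r0 ⬝ᵥ r0))⁻¹ • r0)
    (x1 : Fin d → ℝ)
    (hx1 : x1 = x0 + (s1 ⬝ᵥ r0) • ((Sigma0 * Aᵀ) *ᵥ s1)) :
    x1 = A⁻¹ *ᵥ b := by
  have hstep : (s1 ⬝ᵥ r0) • s1 = r0 := hs1 ▸ dotProduct_smul_normalize_self r0
  rw [hx1, hSigma0, inv_transpose_mul_self_mul_transpose, ← mulVec_smul, hstep, hr0,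
    add_inv_mulVec_residual hA]

/-- **natural prior gives convergence in one iteration.** With prior covariance
`Σ₀ = (Aᵀ A)⁻¹` and first search direction `s₁ = r₀/‖r₀‖₂` (Euclidean normalisation, valid
since `A Σ₀ Aᵀ = I`), the first BayesCG iterate `x₁ = x₀ + Σ₀ Aᵀ s₁ (s₁ᵀ r₀)` equals the
exact solution `x* = A⁻¹ b`. -/
theorem natural_prior_one_step_convergence
    (d : ℕ)
    (A : Matrix (Fin d) (Fin d) ℝ) (hA : IsUnit A)
    (b : Fin d → ℝ)
    (x0 : Fin d → ℝ)
    (r0 : Fin d → ℝ) (hr0 : r0 = b - A *ᵥ x0) (hr0ne : r0 ≠ 0)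
    (Sigma0 : Matrix (Fin d) (Fin d) ℝ) (hSigma0 : Sigma0 = (Aᵀ * A)⁻¹)
    (s1 : Fin d → ℝ) (hs1 : s1 = (Real.sqrt (r0 ⬝ᵥ r0))⁻¹ • r0)
    (x1 : Fin d → ℝ)
    (hx1 : x1 = x0 + (s1 ⬝ᵥ r0) • ((Sigma0 * Aᵀ) *ᵥ s1)) :
    x1 = A⁻¹ *ᵥ b :=
  natural_prior_one_step_convergence_general d A hA b x0 r0 hr0 Sigma0 hSigma0 s1 hs1 x1 hx1
end

section
/- (BayesCG generalises CG) Suppose A is symmetric positive definite and Σ₀ = A⁻¹. Then A Σ₀ Aᵀ = A, and the BayesCG recursion (s̃₁ = r₀; s̃_j = r_{j−1} − ⟨s_{j−1}, r_{j−1}⟩_{AΣ₀Aᵀ} s_{j−1}; s_j = s̃_j/‖s̃_j‖_{AΣ₀Aᵀ}; x_j = x_{j−1} + Σ₀ Aᵀ s_j (s_jᵀ r_{j−1})) coincides with the conjugate gradient recursion (s̃₁^CG = r₀^CG; s̃_j^CG = r_{j−1}^CG − ⟨s_{j−1}^CG, r_{j−1}^CG⟩_A s_{j−1}^CG; s_j^CG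 = s̃_j^CG/‖s̃_j^CG‖_A; x_j^CG = x_{j−1}^CG + s_j^CG (s_j^CG)ᵀ (b − A x_{j−1}^CG)): starting from the same x₀, the search directions and iterates of the two methods are equal, s_j = s_j^CG and x_j = x_j^CG for all j ≤ m (assuming all unnormalised directions are nonzero). -/
open Matrix

/-- **BayesCG generalises CG.** Suppose `A` is symmetric positive definite and
`Σ₀ = A⁻¹`.  Then `A Σ₀ Aᵀ = A`, and the BayesCG recursion (directions `s`, unnormalised
directions `st`, iterates `x`) coincides with the conjugate gradient recursion (directions
`sc`, unnormalised directions `stc`, iterates `xc`) started from the same `x₀`: the search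
directions and iterates of the two methods are equal for all `j ≤ m`, assuming all
unnormalised directions are nonzero. -/
theorem bayescg_generalises_cg
    (d m : ℕ) (hm : m ≤ d)
    (A : Matrix (Fin d) (Fin d) ℝ) (hA : A.PosDef)
    (b : Fin d → ℝ) (x0 : Fin d → ℝ)
    (Sigma0 : Matrix (Fin d) (Fin d) ℝ) (hSigma0 : Sigma0 = A⁻¹)
    -- the BayesCG recursion, with inner products taken w.r.t. `A Σ₀ Aᵀ`
    (x s st : ℕ → Fin d → ℝ)
    (hx0 : x 0 = x0)
    (hst1 : st 1 = b - A *ᵥ x 0)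
    (hstj : ∀ j, 2 ≤ j → j ≤ m →
      st j = (b - A *ᵥ x (j - 1)) -
        (s (j - 1) ⬝ᵥ ((A * Sigma0 * Aᵀ) *ᵥ (b - A *ᵥ x (j - 1)))) • s (j - 1))
    (hs : ∀ j, 1 ≤ j → j ≤ m →
      s j = (Real.sqrt (st j ⬝ᵥ ((A * Sigma0 * Aᵀ) *ᵥ st j)))⁻¹ • st j)
    (hx : ∀ j, 1 ≤ j → j ≤ m →
      x j = x (j - 1) + (s j ⬝ᵥ (b - A *ᵥ x (j - 1))) • ((Sigma0 * Aᵀ) *ᵥ s j))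
    (hnz : ∀ j, 1 ≤ j → j ≤ m → st j ≠ 0)
    -- the conjugate gradient recursion, with inner products taken w.r.t. `A`
    (xc sc stc : ℕ → Fin d → ℝ)
    (hxc0 : xc 0 = x0)
    (hstc1 : stc 1 = b - A *ᵥ xc 0)
    (hstcj : ∀ j, 2 ≤ j → j ≤ m →
      stc j = (b - A *ᵥ xc (j - 1)) -
        (sc (j - 1) ⬝ᵥ (A *ᵥ (b - A *ᵥ xc (j - 1)))) • sc (j - 1))
    (hsc : ∀ j, 1 ≤ j → j ≤ m →
      sc j = (Real.sqrt (stc j ⬝ᵥ (A *ᵥ stc j)))⁻¹ • stc j)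
    (hxc : ∀ j, 1 ≤ j → j ≤ m →
      xc j = xc (j - 1) + (sc j ⬝ᵥ (b - A *ᵥ xc (j - 1))) • sc j)
    (hnzc : ∀ j, 1 ≤ j → j ≤ m → stc j ≠ 0) :
    A * Sigma0 * Aᵀ = A ∧
      (∀ j, 1 ≤ j → j ≤ m → s j = sc j) ∧
      (∀ j ≤ m, x j = xc j) := by
  have hAT : Aᵀ = A := hA.isHermitian.eq
  have hInv : A⁻¹ * A = 1 := nonsing_inv_mul A (isUnit_iff_ne_zero.mpr hA.det_pos.ne')
  have hASA : A * Sigma0 * Aᵀ = A := by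
    rw [hSigma0, hAT, Matrix.mul_assoc, hInv, Matrix.mul_one]
  have hSA : Sigma0 * Aᵀ = 1 := by rw [hSigma0, hAT, hInv]
  have key : ∀ j, j ≤ m → x j = xc j ∧ (1 ≤ j → s j = sc j) := by
    intro j
    induction j with
    | zero => intro _; exact ⟨hx0.trans hxc0.symm, by omega⟩
    | succ n ih =>
      intro hjm
      have ihx : x n = xc n := (ih (by omega)).1
      have hst : st (n + 1) = stc (n + 1) := by
        rcases Nat.eq_zero_or_pos n with h0 | h1
        · subst h0; rw [hst1, hstc1, hx0, hxc0]
        · have hihs : s n = sc n := (ih (by omega)).2 h1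
          rw [hstj (n+1) (by omega) hjm, hstcj (n+1) (by omega) hjm,
            Nat.add_sub_cancel, ihx, hihs, hASA]
      have hseq : s (n + 1) = sc (n + 1) := by
        rw [hs (n+1) (by omega) hjm, hsc (n+1) (by omega) hjm, hst, hASA]
      refine ⟨?_, fun _ => hseq⟩
      rw [hx (n+1) (by omega) hjm, hxc (n+1) (by omega) hjm,
        Nat.add_sub_cancel, ihx, hseq, hSA, one_mulVec]
  exact ⟨hASA, fun j h1 hjm => (key j hjm).2 h1, fun j hjm => (key j hjm).1⟩
end
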